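/- arXiv:2108.13792 — 15 statements merged into one kernel-verified Lean document; each statement's English description precedes it below -/
import Mathlib

section
/- Let n be a natural number with n ≡ 0 (mod 8). For 0 ≤ k ≤ n/2 define the rational numbers c_k by: c_k = 0 if k is odd, and c_k = 2·(−1)^(k/2) · (∏_{λ=0}^{k/2−1} (n² − (4λ)²)) / (4^k · k!) if k is even (the product being empty, hence 1, when k = 0). Then every c_k is an integer, and for all complex numbers x, y: x^n + y^n = ∑_{k=0}^{n/2} c_k · (x·y)^(n/2 − k) · (x² + y²)^k. -/
/-! With `p = xy` and `s = x² + y²`, the sums `P N = x^(2N) + y^(2N)` satisfy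
`P (N + 2) = s P (N + 1) - p² P N`, the recurrence of the Vieta–Lucas polynomials `C_N`
(`C_N (2X) = 2 T_N X`). Hence `P N` is the homogenization of `C_N (s)` in `p`, and the `c_k` are
the coefficients of `C_(n/2)`. Pascal's rule gives the coefficient of `X^i` in `C_(i+2j)` as
`(-1)^j (binom(i+j, i) + binom(i+j-1, i))`. For `i = 2t`, `j = μ - t`, multiplying by `(2t)!` turns
the binomials into falling factorials, and `(μ+t)_(2t) + (μ+t-1)_(2t) = 2 ∏_{l<t} (μ² - l²)`.
For `n = 4μ` the sign `(-1)^(μ-t)` agrees with the `(-1)^(k/2)` in `c_k` exactly when `μ` is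
even, i.e. when `8 ∣ n`. -/

open Finset Polynomial

section

variable {R : Type*} [CommRing R]

theorem descPochhammer_eval_succ_left (n : ℕ) (r : R) :
    (descPochhammer R (n + 1)).eval r = r * (descPochhammer R n).eval (r - 1) := by
  simp [descPochhammer_succ_left]

theorem mul_descPochhammer_eval_add (r : R) (t : ℕ) :
    r * (descPochhammer R (2 * t)).eval (r + t) = (r + t) * ∏ l ∈ range t, (r ^ 2 - l ^ 2) := by
  induction t with
  | zero => simp
  | succ t ih =>
    rw [show 2 * (t + 1) = 2 * t + 1 + 1 by ring, descPochhammer_eval_succ_left,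
      descPochhammer_succ_eval, prod_range_succ]
    push_cast
    rw [show r + (t + 1) - 1 = r + t by ring]
    linear_combination (r + t + 1) * (r - t) * ih

theorem descPochhammer_eval_add_add_eval_add_sub_one (r : R) (t : ℕ) :
    (descPochhammer R (2 * t)).eval (r + t) + (descPochhammer R (2 * t)).eval (r + t - 1) =
      2 * ∏ l ∈ range t, (r ^ 2 - l ^ 2) := by
  rcases t with _ | t
  · norm_num
  rw [show 2 * (t + 1) = 2 * t + 1 + 1 by ring, descPochhammer_eval_succ_left,
    descPochhammer_succ_eval, descPochhammer_succ_eval, descPochhammer_succ_eval, prod_range_succ]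
  push_cast
  rw [show r + (t + 1) - 1 = r + t by ring]
  linear_combination 2 * (r - t) * mul_descPochhammer_eval_add r t

theorem factorial_mul_choose_add_choose (μ t : ℕ) :
    ((2 * t).factorial * ((μ + t).choose (2 * t) + (μ + t - 1).choose (2 * t)) : R) =
      2 * ∏ l ∈ range t, ((μ : R) ^ 2 - l ^ 2) := by
  rcases t with _ | t
  · norm_num
  rw [mul_add, ← Nat.cast_mul, ← Nat.cast_mul, ← Nat.descFactorial_eq_factorial_mul_choose,
    ← Nat.descFactorial_eq_factorial_mul_choose, ← descPochhammer_eval_eq_descFactorial,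
    ← descPochhammer_eval_eq_descFactorial, ← descPochhammer_eval_add_add_eval_add_sub_one]
  push_cast [show μ + (t + 1) - 1 = μ + t by omega]
  rw [show (μ : R) + (t + 1) - 1 = μ + t by ring]

end

namespace Polynomial.Chebyshev

variable {R : Type*} [CommRing R]

theorem coeff_C_natCast_add_two_zero (N : ℕ) :
    (C R (N + 2 : ℕ)).coeff 0 = -(C R N).coeff 0 := by
  simp

theorem coeff_C_natCast_add_two_succ (N k : ℕ) :
    (C R (N + 2 : ℕ)).coeff (k + 1) = (C R (N + 1 : ℕ)).coeff k - (C R N).coeff (k + 1) := by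
  simp

theorem coeff_C_natCast_eq_zero_of_lt {N k : ℕ} (h : N < k) : (C R N).coeff k = 0 := by
  induction N using Nat.twoStepInduction generalizing k with
  | zero =>
    obtain ⟨k, rfl⟩ := Nat.exists_eq_add_one_of_ne_zero h.ne'
    simp [coeff_ofNat_succ]
  | one => simp [coeff_X, h.ne]
  | more N ih₁ ih₂ =>
    obtain ⟨k, rfl⟩ := Nat.exists_eq_add_one_of_ne_zero (by omega : k ≠ 0)
    rw [coeff_C_natCast_add_two_succ, ih₁ (by omega), ih₂ (by omega), sub_zero]

theorem coeff_C_natCast_eq_zero_of_odd {N k : ℕ} (h : Odd (N + k)) : (C R N).coeff k = 0 := by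
  rw [Nat.odd_iff] at h
  induction N using Nat.twoStepInduction generalizing k with
  | zero =>
    obtain ⟨k, rfl⟩ := Nat.exists_eq_add_one_of_ne_zero (by omega : k ≠ 0)
    simp [coeff_ofNat_succ]
  | one => simp [coeff_X]; omega
  | more N ih₁ ih₂ =>
    rcases k with _ | k
    · rw [coeff_C_natCast_add_two_zero, ih₁ (by omega), neg_zero]
    · rw [coeff_C_natCast_add_two_succ, ih₁ (by omega), ih₂ (by omega), sub_zero]

-- At `i = j = 0` the truncated `0 - 1 = 0` makes the right side `2`, the constant term of `C_0`.
theorem coeff_C_add_two_mul (i j : ℕ) :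
    (C R ↑(i + 2 * j)).coeff i = (-1) ^ j * ((i + j).choose i + (i + j - 1).choose i : ℕ) := by
  suffices h : ∀ N i j : ℕ, i + 2 * j = N →
      (C R N).coeff i = (-1) ^ j * ((i + j).choose i + (i + j - 1).choose i : ℕ) from h _ i j rfl
  intro N
  induction N using Nat.twoStepInduction with
  | zero =>
    rintro i j h
    obtain ⟨rfl, rfl⟩ : i = 0 ∧ j = 0 := by omega
    norm_num
  | one =>
    rintro i j h
    obtain ⟨rfl, rfl⟩ : i = 1 ∧ j = 0 := by omega
    simp
  | more N ih₁ ih₂ =>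
    rintro (_ | i) j h
    · obtain ⟨j, rfl⟩ := Nat.exists_eq_add_one_of_ne_zero (by omega : j ≠ 0)
      rw [coeff_C_natCast_add_two_zero, ih₁ 0 j (by omega)]
      simp [pow_succ]
    · rw [coeff_C_natCast_add_two_succ, ih₂ i j (by omega)]
      rcases j with _ | j
      · rw [coeff_C_natCast_eq_zero_of_lt (by omega)]
        simp [Nat.choose_eq_zero_of_lt (by omega : i - 1 < i)]
      · rw [ih₁ (i + 1) j (by omega)]
        have p₁ := Nat.choose_succ_succ (i + j + 1) i
        have p₂ := Nat.choose_succ_succ (i + j) i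
        simp only [show i + 1 + (j + 1) = i + j + 1 + 1 by ring,
          show i + (j + 1) = i + j + 1 by ring, show i + 1 + j = i + j + 1 by ring,
          Nat.add_sub_cancel, p₁, p₂]
        push_cast
        ring

theorem pow_two_mul_add_pow_two_mul_eq_sum (x y : R) (N : ℕ) :
    x ^ (2 * N) + y ^ (2 * N) =
      ∑ k ∈ range (N + 1), (C R N).coeff k * (x * y) ^ (N - k) * (x ^ 2 + y ^ 2) ^ k := by
  induction N using Nat.twoStepInduction with
  | zero => norm_num
  | one => simp [coeff_X]
  | more N ih₁ ih₂ =>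
    set p := x * y
    set s := x ^ 2 + y ^ 2
    have hrec : x ^ (2 * (N + 2)) + y ^ (2 * (N + 2)) =
        s * (x ^ (2 * (N + 1)) + y ^ (2 * (N + 1))) - p ^ 2 * (x ^ (2 * N) + y ^ (2 * N)) := by
      ring
    have hpad : p ^ 2 * ∑ k ∈ range (N + 1), (C R N).coeff k * p ^ (N - k) * s ^ k =
        ∑ k ∈ range (N + 3), (C R N).coeff k * p ^ (N + 2 - k) * s ^ k := by
      rw [mul_sum, sum_range_succ _ (N + 2), sum_range_succ _ (N + 1),
        coeff_C_natCast_eq_zero_of_lt (by omega), coeff_C_natCast_eq_zero_of_lt (by omega)]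
      simp only [zero_mul, add_zero]
      refine sum_congr rfl fun k hk => ?_
      rw [show N + 2 - k = N - k + 2 by have := mem_range.mp hk; omega]
      ring
    rw [hrec, ih₁, ih₂, hpad, mul_sum, sum_range_succ' _ (N + 2), sum_range_succ' _ (N + 2),
      ← sub_sub, ← sum_sub_distrib, coeff_C_natCast_add_two_zero, neg_mul, neg_mul,
      ← sub_eq_add_neg]
    congr 1
    refine sum_congr rfl fun k _ => ?_
    rw [coeff_C_natCast_add_two_succ, show N + 2 - (k + 1) = N + 1 - k by omega]
    ring

theorem intCast_coeff_C (n : ℤ) (k : ℕ) : ((C ℤ n).coeff k : R) = (C R n).coeff k := by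
  rw [← map_C (Int.castRingHom R), coeff_map, eq_intCast]

theorem factorial_mul_coeff_C_two_mul {μ t : ℕ} (ht : t ≤ μ) :
    ((2 * t).factorial : R) * (C R ↑(2 * μ)).coeff (2 * t) =
      (-1) ^ (μ - t) * (2 * ∏ l ∈ range t, ((μ : R) ^ 2 - l ^ 2)) := by
  rw [show 2 * μ = 2 * t + 2 * (μ - t) by omega, coeff_C_add_two_mul,
    show 2 * t + (μ - t) = μ + t by omega, ← factorial_mul_choose_add_choose]
  push_cast
  ring

theorem coeff_C_two_mul_two_mul_of_even {K : Type*} [Field K] [CharZero K] {μ t : ℕ}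
    (hμ : Even μ) (ht : t ≤ μ) :
    (C K ↑(2 * μ)).coeff (2 * t) = 2 * (-1) ^ t *
      (∏ l ∈ range t, (((4 * μ : ℕ) : K) ^ 2 - (4 * (l : K)) ^ 2)) /
        (4 ^ (2 * t) * (2 * t).factorial) := by
  have hsign : (-1 : K) ^ (μ - t) = (-1) ^ t :=
    neg_one_pow_congr (by simp [Nat.even_sub ht, hμ])
  have hprod : ∏ l ∈ range t, (((4 * μ : ℕ) : K) ^ 2 - (4 * (l : K)) ^ 2) =
      4 ^ (2 * t) * ∏ l ∈ range t, ((μ : K) ^ 2 - l ^ 2) := by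
    rw [pow_mul, show ((4 : K) ^ 2) ^ t = ∏ _l ∈ range t, (4 : K) ^ 2 by simp,
      ← prod_mul_distrib]
    exact prod_congr rfl fun l _ => by push_cast; ring
  have key := factorial_mul_coeff_C_two_mul (R := K) ht
  rw [hsign] at key
  rw [hprod, eq_div_iff (by simp [Nat.factorial_ne_zero])]
  linear_combination (4 : K) ^ (2 * t) * key

end Polynomial.Chebyshev

open Polynomial.Chebyshev in
/-- The case `n ≡ 0 (mod 8)` of the Eight Levels Theorem. -/
theorem eight_levels_mod8_zero (n : ℕ) (hn : n % 8 = 0) (c : ℕ → ℚ)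
    (hc_odd : ∀ k ≤ n / 2, k % 2 = 1 → c k = 0)
    (hc_even : ∀ k ≤ n / 2, k % 2 = 0 →
      c k = 2 * (-1 : ℚ) ^ (k / 2) *
        (∏ l ∈ Finset.range (k / 2), ((n : ℚ) ^ 2 - (4 * (l : ℚ)) ^ 2)) /
        (4 ^ k * (Nat.factorial k : ℚ))) :
    (∀ k ≤ n / 2, ∃ z : ℤ, c k = (z : ℚ)) ∧
    ∀ x y : ℂ, x ^ n + y ^ n =
      ∑ k ∈ Finset.range (n / 2 + 1),
        (c k : ℂ) * (x * y) ^ (n / 2 - k) * (x ^ 2 + y ^ 2) ^ k := by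
  obtain ⟨μ, hμ, rfl⟩ : ∃ μ, Even μ ∧ n = 4 * μ :=
    ⟨n / 4, ⟨n / 8, by omega⟩, by omega⟩
  rw [show 4 * μ / 2 = 2 * μ by omega] at hc_odd hc_even ⊢
  have hc : ∀ k ≤ 2 * μ, c k = (C ℤ ↑(2 * μ)).coeff k := by
    intro k hk
    rw [intCast_coeff_C]
    obtain ⟨t, rfl | rfl⟩ := Nat.even_or_odd' k
    · rw [hc_even _ hk (by omega), Nat.mul_div_cancel_left t two_pos,
        coeff_C_two_mul_two_mul_of_even hμ (by omega)]
    · rw [hc_odd _ hk (by omega), coeff_C_natCast_eq_zero_of_odd (by simp [parity_simps])]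
  refine ⟨fun k hk => ⟨_, hc k hk⟩, fun x y => ?_⟩
  rw [show 4 * μ = 2 * (2 * μ) by ring, pow_two_mul_add_pow_two_mul_eq_sum]
  refine sum_congr rfl fun k hk => ?_
  rw [hc k (Nat.lt_succ_iff.mp (mem_range.mp hk)), Rat.cast_intCast, intCast_coeff_C]
end

section
/- Let n be a natural number with n ≡ 2 (mod 8). For 0 ≤ k ≤ n/2 define the rational numbers c_k by: c_k = 0 if k is even, and c_k = 2·(−1)^((k−1)/2) · n · (∏_{λ=1}^{(k−1)/2} (n² − (4λ−2)²)) / (4^k · k!) if k is odd (the product being empty, hence 1, when k = 1). Then every c_k is an integer, and for all complex numbers x, y: x^n + y^n = ∑_{k=0}^{n/2} c_k · (x·y)^(n/2 − k) · (x² + y²)^k. -/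
/-!
Write `n = 2m` and put `u = x²`, `v = y²`, `w = xy`, so that `uv = w²`. The power sums
`u^m + v^m` satisfy the three-term recurrence of the Vieta–Lucas polynomials `C_m`
(`C_m(2 cos θ) = 2 cos mθ`), so homogenizing `C_m` gives
`u^m + v^m = ∑ₖ [Xᵏ] C_m · (u + v)ᵏ · w^(m-k)` with integer coefficients.
The Chebyshev differential equation, read off at `X = 0`, yields
`4 (k+1)(k+2) [X^(k+2)] C_m = (k² - m²) [Xᵏ] C_m`, which is the ratio of consecutive `c_k`.
For `m ≡ 1 (mod 4)` the initial values `[X⁰] C_m = 0` and `[X¹] C_m = m` agree with `c₀` and `c₁`,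
so `c_k = [Xᵏ] C_m` for all `k ≤ m`.
-/

open Finset Polynomial

namespace Polynomial

lemma eval_homogenize_eq_sum {R : Type*} [CommRing R] (p : R[X]) (n : ℕ) (a b : R) :
    MvPolynomial.eval ![a, b] (p.homogenize n) =
      ∑ k ∈ range (n + 1), p.coeff k * a ^ k * b ^ (n - k) := by
  simp only [homogenize, Nat.sum_antidiagonal_eq_sum_range_succ_mk, map_sum,
    MvPolynomial.eval_monomial]
  refine sum_congr rfl fun k _ => ?_
  rw [Finsupp.prod_fintype _ _ (by simp)]
  simp [mul_assoc]

namespace Chebyshev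

variable {R : Type*} [CommRing R]

variable (R) in
lemma natDegree_C_le (n : ℕ) : (C R n).natDegree ≤ n := by
  induction n using Nat.twoStepInduction with
  | zero => simp
  | one => simpa using natDegree_X_le
  | more n ih₀ ih₁ =>
    push_cast [C_add_two] at ih₁ ⊢
    refine (natDegree_sub_le _ _).trans (max_le ?_ (by omega))
    exact natDegree_mul_le.trans (by linarith [natDegree_X_le (R := R)])

variable (R) in
lemma homogenize_C_add_two (n : ℕ) :
    (C R (n + 2 : ℕ)).homogenize (n + 2) =
      .X 0 * (C R (n + 1 : ℕ)).homogenize (n + 1) - .X 1 ^ 2 * (C R n).homogenize n := by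
  have hC : C R (n + 2 : ℕ) = X * C R (n + 1 : ℕ) - C R n * 1 := by
    push_cast; rw [C_add_two, mul_one]
  rw [hC, homogenize_sub, show n + 2 = 1 + (n + 1) by omega,
    homogenize_mul _ _ natDegree_X_le (natDegree_C_le R _), homogenize_X one_ne_zero,
    show 1 + (n + 1) = n + 2 by omega,
    homogenize_mul _ _ (natDegree_C_le R n) (by simp : (1 : R[X]).natDegree ≤ 2),
    homogenize_one]
  ring

theorem eval_homogenize_C {u v w : R} (h : u * v = w ^ 2) (n : ℕ) :
    MvPolynomial.eval ![u + v, w] ((C R n).homogenize n) = u ^ n + v ^ n := by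
  induction n using Nat.twoStepInduction with
  | zero =>
    rw [Nat.cast_zero, C_zero, ← Polynomial.C_ofNat, homogenize_C, pow_zero, mul_one,
      MvPolynomial.eval_C, pow_zero, pow_zero, one_add_one_eq_two]
  | one => simp
  | more n ih₀ ih₁ =>
    rw [homogenize_C_add_two]
    simp only [map_sub, map_mul, map_pow, MvPolynomial.eval_X, ih₀, ih₁, Matrix.cons_val_zero,
      Matrix.cons_val_one, Matrix.cons_val_fin_one]
    linear_combination (u ^ n + v ^ n) * h

theorem pow_add_pow_eq_sum_coeff_C {u v w : R} (h : u * v = w ^ 2) (n : ℕ) :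
    u ^ n + v ^ n = ∑ k ∈ range (n + 1), (C R n).coeff k * (u + v) ^ k * w ^ (n - k) := by
  rw [← eval_homogenize_C h, eval_homogenize_eq_sum]

lemma coeff_C_mul_two_pow (n : ℤ) (k : ℕ) :
    (C R n).coeff k * 2 ^ k = 2 * (T R n).coeff k := by
  have h := congrArg (coeff · k) (C_comp_two_mul_X R n)
  rwa [← Polynomial.C_ofNat, comp_C_mul_X_coeff, coeff_C_mul] at h

lemma factorial_mul_coeff_T_add_two (n : ℤ) (k : ℕ) :
    ((k + 2).factorial : R) * (T R n).coeff (k + 2) =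
      (k ^ 2 - n ^ 2) * k.factorial * (T R n).coeff k := by
  have h := iterate_derivative_T_eval_zero_recurrence (R := R) n k
  simp only [← coeff_zero_eq_eval_zero, coeff_iterate_derivative, zero_add,
    Nat.descFactorial_self, nsmul_eq_mul] at h
  linear_combination h

lemma coeff_C_zero_of_odd {n : ℤ} (hn : Odd n) : (C R n).coeff 0 = 0 := by
  simpa [coeff_zero_eq_eval_zero, hn] using coeff_C_mul_two_pow (R := R) n 0

variable [IsDomain R] [CharZero R]

lemma coeff_C_one_of_odd {n : ℤ} (hn : Odd n) :
    (C R n).coeff 1 = ((n - 1) / 2).negOnePow * n := by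
  have h := coeff_C_mul_two_pow (R := R) n 1
  have hT : (T R n).coeff 1 = ((n - 1) / 2).negOnePow * n := by
    have := congrArg (eval 0) (T_derivative_eq_U (R := R) n)
    rw [← coeff_zero_eq_eval_zero, coeff_derivative, eval_mul,
      U_eval_zero_of_even (R := R) (by simpa [Int.even_sub_one] using hn)] at this
    simpa [mul_comm] using this
  rw [hT, pow_one, mul_comm] at h
  exact mul_left_cancel₀ two_ne_zero h

lemma coeff_C_add_two (n : ℤ) (k : ℕ) :
    4 * ((k + 1) * (k + 2)) * (C R n).coeff (k + 2) = (k ^ 2 - n ^ 2) * (C R n).coeff k := by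
  have h₂ := coeff_C_mul_two_pow (R := R) n (k + 2)
  have h₀ := coeff_C_mul_two_pow (R := R) n k
  have hT := factorial_mul_coeff_T_add_two (R := R) n k
  push_cast [Nat.factorial_succ] at hT
  refine mul_left_cancel₀ (mul_ne_zero (pow_ne_zero k two_ne_zero)
    (Nat.cast_ne_zero.2 k.factorial_ne_zero) : (2 ^ k * k.factorial : R) ≠ 0) ?_
  linear_combination ((k + 1) * (k + 2) * k.factorial : R) * h₂ -
    ((k ^ 2 - n ^ 2) * k.factorial : R) * h₀ + 2 * hT

lemma eq_coeff_C_of_recurrence {m : ℕ} {a : ℕ → R} (h₀ : a 0 = (C R m).coeff 0)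
    (h₁ : a 1 = (C R m).coeff 1)
    (hrec : ∀ k, k + 2 ≤ m → 4 * ((k + 1) * (k + 2)) * a (k + 2) = (k ^ 2 - m ^ 2) * a k) :
    ∀ k ≤ m, a k = (C R m).coeff k := by
  intro k
  induction k using Nat.twoStepInduction with
  | zero => exact fun _ => h₀
  | one => exact fun _ => h₁
  | more k ih₀ _ =>
    intro hk
    refine mul_left_cancel₀ (by exact_mod_cast (by positivity : 4 * ((k + 1) * (k + 2)) ≠ 0) :
      (4 * ((k + 1) * (k + 2)) : R) ≠ 0) ?_
    rw [hrec k hk, ih₀ (by omega), coeff_C_add_two]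
    push_cast
    rfl

end Chebyshev

end Polynomial

def eightLevelsCoeff (n k : ℕ) : ℚ :=
  2 * (-1 : ℚ) ^ ((k - 1) / 2) * (n : ℚ) *
    (∏ l ∈ Icc 1 ((k - 1) / 2), ((n : ℚ) ^ 2 - (4 * (l : ℚ) - 2) ^ 2)) /
    (4 ^ k * (Nat.factorial k : ℚ))

lemma eightLevelsCoeff_one (n : ℕ) : eightLevelsCoeff n 1 = n / 2 := by
  norm_num [eightLevelsCoeff]
  ring

lemma eightLevelsCoeff_add_two {k : ℕ} (hk : Odd k) (n : ℕ) :
    16 * ((k + 1) * (k + 2)) * eightLevelsCoeff n (k + 2) =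
      ((2 * k) ^ 2 - n ^ 2) * eightLevelsCoeff n k := by
  obtain ⟨t, rfl⟩ := hk
  have ht : (2 * t + 1 + 2 - 1) / 2 = t + 1 := by omega
  simp only [eightLevelsCoeff, ht, Nat.add_sub_cancel, Nat.mul_div_cancel_left _ two_pos,
    prod_Icc_succ_top (Nat.le_add_left 1 t), Nat.factorial_succ, pow_succ]
  field_simp
  push_cast
  ring

/-- The case `n ≡ 2 (mod 8)` of the Eight Levels Theorem. -/
theorem eight_levels_mod8_two (n : ℕ) (hn : n % 8 = 2) (c : ℕ → ℚ)
    (hc_even : ∀ k ≤ n / 2, k % 2 = 0 → c k = 0)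
    (hc_odd : ∀ k ≤ n / 2, k % 2 = 1 →
      c k = 2 * (-1 : ℚ) ^ ((k - 1) / 2) * (n : ℚ) *
        (∏ l ∈ Finset.Icc 1 ((k - 1) / 2), ((n : ℚ) ^ 2 - (4 * (l : ℚ) - 2) ^ 2)) /
        (4 ^ k * (Nat.factorial k : ℚ))) :
    (∀ k ≤ n / 2, ∃ z : ℤ, c k = (z : ℚ)) ∧
    ∀ x y : ℂ, x ^ n + y ^ n =
      ∑ k ∈ Finset.range (n / 2 + 1),
        (c k : ℂ) * (x * y) ^ (n / 2 - k) * (x ^ 2 + y ^ 2) ^ k := by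
  obtain ⟨m, rfl⟩ : ∃ m, n = 2 * m := ⟨n / 2, by omega⟩
  have hm : 2 * m / 2 = m := by omega
  have hodd : Odd (m : ℤ) := by rw [Int.odd_iff]; omega
  rw [hm] at hc_even hc_odd ⊢
  replace hc_odd : ∀ k ≤ m, k % 2 = 1 → c k = eightLevelsCoeff (2 * m) k := hc_odd
  have hc : ∀ k ≤ m, c k = (Chebyshev.C ℚ m).coeff k := by
    refine Chebyshev.eq_coeff_C_of_recurrence ?_ ?_ fun k hk => ?_
    · rw [hc_even 0 (by omega) rfl, Chebyshev.coeff_C_zero_of_odd hodd]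
    · rw [hc_odd 1 (by omega) rfl, eightLevelsCoeff_one, Chebyshev.coeff_C_one_of_odd hodd,
        Int.negOnePow_even _ ⟨((m : ℤ) - 1) / 4, by omega⟩]
      push_cast
      ring
    · rcases Nat.mod_two_eq_zero_or_one k with hk' | hk'
      · rw [hc_even k (by omega) hk', hc_even (k + 2) (by omega) (by omega)]
        ring
      · rw [hc_odd k (by omega) hk', hc_odd (k + 2) (by omega) (by omega)]
        linear_combination (norm := (push_cast; ring))
          eightLevelsCoeff_add_two (Nat.odd_iff.mpr hk') (2 * m) / 4
  refine ⟨fun k hk => ⟨(Chebyshev.C ℤ m).coeff k, ?_⟩, fun x y => ?_⟩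
  · rw [hc k hk, ← Chebyshev.map_C (Int.castRingHom ℚ), coeff_map, eq_intCast]
  · rw [pow_mul, pow_mul, Chebyshev.pow_add_pow_eq_sum_coeff_C (w := x * y) (by ring)]
    refine sum_congr rfl fun k hk => ?_
    rw [hc k (mem_range_succ_iff.mp hk), ← Chebyshev.map_C (Rat.castHom ℂ), coeff_map,
      eq_ratCast]
    ring
end

section
/- Let n be a natural number with n ≡ 4 (mod 8). For 0 ≤ k ≤ n/2 define the rational numbers c_k by: c_k = 0 if k is odd, and c_k = 2·(−1)^(k/2 + 1) · (∏_{λ=0}^{k/2−1} (n² − (4λ)²)) / (4^k · k!) if k is even (the product being empty, hence 1, when k = 0). Then every c_k is an integer, and for all complex numbers x, y: x^n + y^n = ∑_{k=0}^{n/2} c_k · (x·y)^(n/2 − k) · (x² + y²)^k. -/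
open Finset

def gg (j i : ℕ) : ℤ := 2 * ((j - i).choose i : ℤ) - ((j - 1 - i).choose i : ℤ)

lemma gg_zero {j i : ℕ} (h : j < 2 * i) : gg j i = 0 := by
  unfold gg
  rw [Nat.choose_eq_zero_of_lt (by omega), Nat.choose_eq_zero_of_lt (by omega)]
  ring

lemma gg_rec {j i : ℕ} (hj : 1 ≤ j) (hi : 1 ≤ i) :
    gg (j + 2) i = gg (j + 1) i + gg j (i - 1) := by
  obtain ⟨i, rfl⟩ : ∃ i', i = i' + 1 := ⟨i - 1, by omega⟩
  simp only [Nat.add_sub_cancel]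
  by_cases h : i + 1 ≤ j
  · obtain ⟨d, rfl⟩ : ∃ d, j = i + 1 + d := ⟨j - (i + 1), by omega⟩
    unfold gg
    rw [show i + 1 + d + 2 - (i + 1) = d + 2 by omega,
        show i + 1 + d + 2 - 1 - (i + 1) = d + 1 by omega,
        show i + 1 + d + 1 - (i + 1) = d + 1 by omega,
        show i + 1 + d + 1 - 1 - (i + 1) = d by omega,
        show i + 1 + d - i = d + 1 by omega,
        show i + 1 + d - 1 - i = d by omega,
        Nat.choose_succ_succ' (d + 1) i, Nat.choose_succ_succ' d i]
    push_cast
    ring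
  · rw [gg_zero (by omega), gg_zero (by omega), gg_zero (by omega)]
    ring

lemma waring : ∀ j : ℕ, 1 ≤ j → ∀ u v : ℂ,
    u ^ j + v ^ j = ∑ i ∈ range (j + 1),
      (-1 : ℂ) ^ i * (gg j i : ℂ) * (u * v) ^ i * (u + v) ^ (j - 2 * i) := by
  intro j
  induction j using Nat.twoStepInduction with
  | zero => omega
  | one =>
    intro _ u v
    simp [sum_range_succ, gg]
    ring
  | more j ih1 ih2 =>
    intro _ u v
    rcases Nat.eq_zero_or_pos j with rfl | hj
    · simp only [zero_add]
      rw [sum_range_succ, sum_range_succ, sum_range_succ, sum_range_zero]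
      simp [gg]
      ring
    have key : u ^ (j + 2) + v ^ (j + 2)
        = (u + v) * (u ^ (j + 1) + v ^ (j + 1)) - (u * v) * (u ^ j + v ^ j) := by ring
    rw [key, ih2 (by omega) u v, ih1 (by omega) u v]
    set p := u * v with hp
    set s := u + v with hs
    -- RHS: peel via sum_range_succ'
    rw [Finset.sum_range_succ' (fun i => (-1 : ℂ) ^ i * (gg (j+2) i : ℂ) * p ^ i * s ^ (j + 2 - 2 * i)) (j + 2)]
    have h0 : (-1 : ℂ) ^ 0 * (gg (j+2) 0 : ℂ) * p ^ 0 * s ^ (j + 2 - 2 * 0) = s ^ (j + 2) := by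
      simp [gg]
    rw [h0]
    have hterm : ∀ i ∈ range (j + 2),
        (-1 : ℂ) ^ (i+1) * (gg (j+2) (i+1) : ℂ) * p ^ (i+1) * s ^ (j + 2 - 2 * (i+1))
        = (-1 : ℂ) ^ (i+1) * (gg (j+1) (i+1) : ℂ) * p ^ (i+1) * s ^ (j - 2 * i)
          + (-1 : ℂ) ^ (i+1) * (gg j i : ℂ) * p ^ (i+1) * s ^ (j - 2 * i) := by
      intro i _
      rw [gg_rec (by omega) (by omega), show j + 2 - 2 * (i + 1) = j - 2 * i by omega]
      simp only [Nat.add_sub_cancel]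
      push_cast
      ring
    rw [Finset.sum_congr rfl hterm, Finset.sum_add_distrib]
    -- LHS first piece: s * sum over (j+1)-coefficients
    have lhs1 : s * ∑ i ∈ range (j + 1 + 1), (-1 : ℂ) ^ i * (gg (j+1) i : ℂ) * p ^ i * s ^ (j + 1 - 2 * i)
        = s ^ (j + 2) + ∑ i ∈ range (j + 2), (-1 : ℂ) ^ (i+1) * (gg (j+1) (i+1) : ℂ) * p ^ (i+1) * s ^ (j - 2 * i) := by
      rw [Finset.mul_sum]
      have step : ∀ i ∈ range (j + 2),
          s * ((-1 : ℂ) ^ i * (gg (j+1) i : ℂ) * p ^ i * s ^ (j + 1 - 2 * i))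
          = (-1 : ℂ) ^ i * (gg (j+1) i : ℂ) * p ^ i * s ^ (j + 2 - 2 * i) := by
        intro i _
        rcases le_or_gt (2 * i) (j + 1) with h | h
        · rw [show j + 2 - 2 * i = (j + 1 - 2 * i) + 1 by omega, pow_succ]
          ring
        · rw [gg_zero (by omega)]
          push_cast
          ring
      rw [show j + 1 + 1 = j + 2 from rfl, Finset.sum_congr rfl step,
          Finset.sum_range_succ' (fun i => (-1 : ℂ) ^ i * (gg (j+1) i : ℂ) * p ^ i * s ^ (j + 2 - 2 * i)) (j + 1)]
      have h0' : (-1 : ℂ) ^ 0 * (gg (j+1) 0 : ℂ) * p ^ 0 * s ^ (j + 2 - 2 * 0) = s ^ (j + 2) := by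
        simp [gg]
      rw [h0']
      have hcongr : ∀ i ∈ range (j + 1),
          (-1 : ℂ) ^ (i+1) * (gg (j+1) (i+1) : ℂ) * p ^ (i+1) * s ^ (j + 2 - 2 * (i+1))
          = (-1 : ℂ) ^ (i+1) * (gg (j+1) (i+1) : ℂ) * p ^ (i+1) * s ^ (j - 2 * i) := by
        intro i _
        rw [show j + 2 - 2 * (i + 1) = j - 2 * i by omega]
      rw [Finset.sum_congr rfl hcongr,
          Finset.sum_range_succ (fun i => (-1 : ℂ) ^ (i+1) * (gg (j+1) (i+1) : ℂ) * p ^ (i+1) * s ^ (j - 2 * i)) (j + 1)]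
      rw [gg_zero (show j + 1 < 2 * (j + 1 + 1) by omega)]
      push_cast
      ring
    have lhs2 : p * ∑ i ∈ range (j + 1), (-1 : ℂ) ^ i * (gg j i : ℂ) * p ^ i * s ^ (j - 2 * i)
        = - ∑ i ∈ range (j + 2), (-1 : ℂ) ^ (i+1) * (gg j i : ℂ) * p ^ (i+1) * s ^ (j - 2 * i) := by
      rw [Finset.mul_sum,
          Finset.sum_range_succ (fun i => (-1 : ℂ) ^ (i+1) * (gg j i : ℂ) * p ^ (i+1) * s ^ (j - 2 * i)) (j + 1)]
      rw [gg_zero (show j < 2 * (j + 1) by omega)]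
      simp only [Int.cast_zero, mul_zero, zero_mul, add_zero, neg_add, neg_zero]
      rw [← Finset.sum_neg_distrib]
      exact Finset.sum_congr rfl fun i _ => by ring
    rw [lhs1, lhs2]
    ring

lemma sum_split (N : ℕ) (h : ℕ → ℂ) :
    ∑ k ∈ range (2 * N + 1), h k
      = ∑ j ∈ range (N + 1), h (2 * j) + ∑ j ∈ range N, h (2 * j + 1) := by
  induction N with
  | zero => simp
  | succ N ih =>
    rw [show 2 * (N + 1) + 1 = (2 * N + 1) + 1 + 1 by ring, sum_range_succ, sum_range_succ, ih,
        sum_range_succ (fun j => h (2 * j)) (N + 1), sum_range_succ (fun j => h (2 * j + 1)) N,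
        show 2 * N + 1 + 1 = 2 * (N + 1) by ring]
    ring

lemma factA (t : ℕ) : ∀ j ≤ 2 * t + 1,
    (∏ l ∈ range j, ((2 * t + 1 : ℚ) - l)) * ((2 * t + 1 - j).factorial : ℚ)
      = ((2 * t + 1).factorial : ℚ) := by
  intro j
  induction j with
  | zero => simp
  | succ j ih =>
    intro hj
    rw [prod_range_succ, show (2 * t + 1 - (j + 1)) = (2 * t + 1 - j) - 1 by omega]
    have h1 : (2 * t + 1 - j) = ((2 * t + 1 - j) - 1) + 1 := by omega
    have h2 : (((2 * t + 1 - j) : ℕ) : ℚ) = (2 * t + 1 : ℚ) - j := by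
      push_cast [Nat.cast_sub (by omega : j ≤ 2 * t + 1)]
      ring
    calc (∏ l ∈ range j, ((2 * t + 1 : ℚ) - l)) * ((2 * t + 1 : ℚ) - j) * ((2 * t + 1 - j - 1).factorial : ℚ)
        = (∏ l ∈ range j, ((2 * t + 1 : ℚ) - l)) * ((((2 * t + 1 - j) : ℕ) : ℚ) * ((2 * t + 1 - j - 1).factorial : ℚ)) := by
          rw [h2]; ring
      _ = ((2 * t + 1).factorial : ℚ) := by
          rw [show (((2 * t + 1 - j) : ℕ) : ℚ) * ((2 * t + 1 - j - 1).factorial : ℚ)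
                = (((2 * t + 1 - j).factorial : ℕ) : ℚ) by
            conv_lhs => rw [h1]
            rw [← h1]
            norm_cast
            rw [h1, Nat.factorial_succ, ← h1]]
          exact ih (by omega)

lemma factB (t : ℕ) : ∀ j : ℕ,
    (∏ l ∈ range j, ((2 * t + 1 : ℚ) + l)) * ((2 * t).factorial : ℚ)
      = ((2 * t + j).factorial : ℚ) := by
  intro j
  induction j with
  | zero => simp
  | succ j ih =>
    rw [prod_range_succ, show 2 * t + (j + 1) = (2 * t + j) + 1 by ring, Nat.factorial_succ]
    push_cast
    rw [mul_comm (∏ l ∈ range j, ((2 * t + 1 : ℚ) + l)) _]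
    rw [mul_assoc, ih]
    ring

lemma key_coeff (t j : ℕ) (hj : j ≤ 2 * t + 1) :
    2 * (-1 : ℚ) ^ (j + 1) *
        (∏ l ∈ range j, (((8 * t + 4 : ℕ) : ℚ) ^ 2 - (4 * (l : ℚ)) ^ 2)) /
        (4 ^ (2 * j) * ((2 * j).factorial : ℚ))
      = (((-1) ^ (2 * t + 1 - j) * gg (4 * t + 2) (2 * t + 1 - j) : ℤ) : ℚ) := by
  have hfne : ∀ m : ℕ, ((m.factorial : ℚ)) ≠ 0 := fun m =>
    Nat.cast_ne_zero.mpr (Nat.factorial_ne_zero m)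
  have hsign : ((-1 : ℚ)) ^ (2 * t + 1 - j) = (-1 : ℚ) ^ (j + 1) := by
    have h1 : (-1 : ℚ) ^ ((2 * t + 1 - j) + (j + 1)) = 1 := by
      rw [show (2 * t + 1 - j) + (j + 1) = 2 * (t + 1) by omega, pow_mul]; norm_num
    have h2 : (-1 : ℚ) ^ (j + 1) * (-1 : ℚ) ^ (j + 1) = 1 := by
      rw [← pow_add, show (j + 1) + (j + 1) = 2 * (j + 1) by ring, pow_mul]; norm_num
    rw [pow_add] at h1
    exact mul_right_cancel₀ (by positivity) (h1.trans h2.symm)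
  have hgg : ((gg (4 * t + 2) (2 * t + 1 - j) : ℤ) : ℚ)
      = 2 * ((2 * t + 1 + j).choose (2 * t + 1 - j) : ℚ)
        - ((2 * t + j).choose (2 * t + 1 - j) : ℚ) := by
    unfold gg
    rw [show 4 * t + 2 - (2 * t + 1 - j) = 2 * t + 1 + j by omega,
        show 4 * t + 2 - 1 - (2 * t + 1 - j) = 2 * t + j by omega]
    push_cast
    ring
  have hprod : (∏ l ∈ range j, (((8 * t + 4 : ℕ) : ℚ) ^ 2 - (4 * (l : ℚ)) ^ 2))
      = 16 ^ j * ((∏ l ∈ range j, ((2 * t + 1 : ℚ) - l)) * (∏ l ∈ range j, ((2 * t + 1 : ℚ) + l))) := by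
    have h16 : (16 : ℚ) ^ j = ∏ _l ∈ range j, (16 : ℚ) := by rw [prod_const, card_range]
    rw [h16, ← Finset.prod_mul_distrib, ← Finset.prod_mul_distrib]
    exact prod_congr rfl fun l _ => by push_cast; ring
  push_cast only [Int.cast_mul, Int.cast_pow, Int.cast_neg, Int.cast_one]
  rw [hsign, hgg, hprod]
  rcases Nat.eq_zero_or_pos j with rfl | hj1
  · simp [Nat.choose_self, Nat.choose_eq_zero_of_lt (show 2 * t < 2 * t + 1 by omega)]
  -- j ≥ 1 case
  have hA := factA t j hj
  have hB := factB t j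
  have hC1 : ((2 * t + 1 + j).choose (2 * t + 1 - j) : ℚ)
      = ((2 * t + 1 + j).factorial : ℚ) / (((2 * t + 1 - j).factorial : ℚ) * ((2 * j).factorial : ℚ)) := by
    rw [Nat.cast_choose ℚ (by omega : 2 * t + 1 - j ≤ 2 * t + 1 + j),
        show (2 * t + 1 + j) - (2 * t + 1 - j) = 2 * j by omega]
  have hC2 : ((2 * t + j).choose (2 * t + 1 - j) : ℚ)
      = ((2 * t + j).factorial : ℚ) / (((2 * t + 1 - j).factorial : ℚ) * ((2 * j - 1).factorial : ℚ)) := by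
    rw [Nat.cast_choose ℚ (by omega : 2 * t + 1 - j ≤ 2 * t + j),
        show (2 * t + j) - (2 * t + 1 - j) = 2 * j - 1 by omega]
  have hf1 : ((2 * t + 1 + j).factorial : ℚ) = (2 * t + 1 + j : ℚ) * ((2 * t + j).factorial : ℚ) := by
    rw [show 2 * t + 1 + j = (2 * t + j) + 1 by ring, Nat.factorial_succ]
    push_cast; ring
  have hf2 : ((2 * j).factorial : ℚ) = (2 * j : ℚ) * ((2 * j - 1).factorial : ℚ) := by
    rw [show 2 * j = (2 * j - 1) + 1 by omega, Nat.factorial_succ]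
    push_cast [Nat.cast_sub (show 1 ≤ 2 * j by omega)]
    ring
  have hf3 : ((2 * t + 1).factorial : ℚ) = (2 * t + 1 : ℚ) * ((2 * t).factorial : ℚ) := by
    rw [Nat.factorial_succ]; push_cast; ring
  have hAq : (∏ l ∈ range j, ((2 * t + 1 : ℚ) - l))
      = ((2 * t + 1).factorial : ℚ) / ((2 * t + 1 - j).factorial : ℚ) := by
    rw [eq_div_iff (hfne _)]; exact hA
  have hBq : (∏ l ∈ range j, ((2 * t + 1 : ℚ) + l))
      = ((2 * t + j).factorial : ℚ) / ((2 * t).factorial : ℚ) := by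
    rw [eq_div_iff (hfne _)]; exact hB
  rw [hC1, hC2, hAq, hBq, hf1, hf2, hf3]
  have h4 : (4 : ℚ) ^ (2 * j) = 16 ^ j := by
    rw [pow_mul]; norm_num
  rw [h4]
  have h16 : (16 : ℚ) ^ j ≠ 0 := by positivity
  have h2j : (2 * j : ℚ) ≠ 0 := by
    have : (0:ℚ) < 2 * j := by exact_mod_cast (by omega : 0 < 2 * j)
    exact this.ne'
  field_simp
  ring

/-- The case `n ≡ 4 (mod 8)` of the Eight Levels Theorem. -/
theorem eight_levels_mod8_four (n : ℕ) (hn : n % 8 = 4) (c : ℕ → ℚ)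
    (hc_odd : ∀ k ≤ n / 2, k % 2 = 1 → c k = 0)
    (hc_even : ∀ k ≤ n / 2, k % 2 = 0 →
      c k = 2 * (-1 : ℚ) ^ (k / 2 + 1) *
        (∏ l ∈ Finset.range (k / 2), ((n : ℚ) ^ 2 - (4 * (l : ℚ)) ^ 2)) /
        (4 ^ k * (Nat.factorial k : ℚ))) :
    (∀ k ≤ n / 2, ∃ z : ℤ, c k = (z : ℚ)) ∧
    ∀ x y : ℂ, x ^ n + y ^ n =
      ∑ k ∈ Finset.range (n / 2 + 1),
        (c k : ℂ) * (x * y) ^ (n / 2 - k) * (x ^ 2 + y ^ 2) ^ k := by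
  obtain ⟨t, rfl⟩ : ∃ t, n = 8 * t + 4 := ⟨n / 8, by omega⟩
  have hn2 : (8 * t + 4) / 2 = 4 * t + 2 := by omega
  have hckey : ∀ j ≤ 2 * t + 1,
      c (2 * j) = (((-1) ^ (2 * t + 1 - j) * gg (4 * t + 2) (2 * t + 1 - j) : ℤ) : ℚ) := by
    intro j hj
    rw [hc_even (2 * j) (by omega) (by omega), show (2 * j) / 2 = j by omega]
    exact key_coeff t j hj
  constructor
  · intro k hk
    rcases Nat.even_or_odd k with ⟨j, rfl⟩ | hodd
    · refine ⟨(-1) ^ (2 * t + 1 - j) * gg (4 * t + 2) (2 * t + 1 - j), ?_⟩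
      rw [show j + j = 2 * j by ring]
      exact hckey j (by omega)
    · exact ⟨0, by rw [hc_odd k hk (Nat.odd_iff.mp hodd)]; simp⟩
  · intro x y
    simp only [hn2]
    rw [show 8 * t + 4 = 2 * (4 * t + 2) by ring, pow_mul, pow_mul,
        waring (4 * t + 2) (by omega) (x ^ 2) (y ^ 2)]
    have htrunc : ∑ i ∈ range (4 * t + 2 + 1),
          (-1 : ℂ) ^ i * (gg (4 * t + 2) i : ℂ) * (x ^ 2 * y ^ 2) ^ i * (x ^ 2 + y ^ 2) ^ (4 * t + 2 - 2 * i)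
        = ∑ i ∈ range (2 * t + 2),
          (-1 : ℂ) ^ i * (gg (4 * t + 2) i : ℂ) * (x ^ 2 * y ^ 2) ^ i * (x ^ 2 + y ^ 2) ^ (4 * t + 2 - 2 * i) := by
      refine (Finset.sum_subset (Finset.range_subset_range.mpr (by omega)) fun i hi hni => ?_).symm
      rw [gg_zero (show 4 * t + 2 < 2 * i by
        simp only [mem_range] at hi hni; omega)]
      simp
    rw [htrunc]
    rw [show 4 * t + 2 + 1 = 2 * (2 * t + 1) + 1 by ring,
        sum_split (2 * t + 1) (fun k => (c k : ℂ) * (x * y) ^ (4 * t + 2 - k) * (x ^ 2 + y ^ 2) ^ k)]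
    have hoddzero : ∑ j ∈ range (2 * t + 1),
        ((c (2 * j + 1) : ℂ) * (x * y) ^ (4 * t + 2 - (2 * j + 1)) * (x ^ 2 + y ^ 2) ^ (2 * j + 1)) = 0 := by
      refine Finset.sum_eq_zero fun j hj => ?_
      rw [hc_odd (2 * j + 1) (by simp only [mem_range] at hj; omega) (by omega)]
      simp
    rw [hoddzero, add_zero, show 2 * t + 1 + 1 = 2 * t + 2 by ring]
    rw [← Finset.sum_range_reflect
      (fun i => (-1 : ℂ) ^ i * (gg (4 * t + 2) i : ℂ) * (x ^ 2 * y ^ 2) ^ i * (x ^ 2 + y ^ 2) ^ (4 * t + 2 - 2 * i))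
      (2 * t + 2)]
    refine Finset.sum_congr rfl fun j hj => ?_
    simp only [mem_range] at hj
    rw [show 2 * t + 2 - 1 - j = 2 * t + 1 - j by omega]
    rw [hckey j (by omega)]
    have hp : (x ^ 2 * y ^ 2) ^ (2 * t + 1 - j) = (x * y) ^ (4 * t + 2 - 2 * j) := by
      rw [show x ^ 2 * y ^ 2 = (x * y) ^ 2 by ring, ← pow_mul,
          show 2 * (2 * t + 1 - j) = 4 * t + 2 - 2 * j by omega]
    rw [hp, show 4 * t + 2 - 2 * (2 * t + 1 - j) = 2 * j by omega]
    push_cast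
    ring
end

section
/- Let n be a natural number with n ≡ 6 (mod 8). For 0 ≤ k ≤ n/2 define the rational numbers c_k by: c_k = 0 if k is even, and c_k = 2·(−1)^((k−1)/2 + 1) · n · (∏_{λ=1}^{(k−1)/2} (n² − (4λ−2)²)) / (4^k · k!) if k is odd (the product being empty, hence 1, when k = 1). Then every c_k is an integer, and for all complex numbers x, y: x^n + y^n = ∑_{k=0}^{n/2} c_k · (x·y)^(n/2 − k) · (x² + y²)^k. -/
/-!
With `m = n / 2 = 2a + 1`, `x ^ n + y ^ n = X ^ m + Y ^ m` for `X = x ^ 2`, `Y = y ^ 2`, and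
`X ^ m + Y ^ m` is the Dickson polynomial `D_m(s, p)` of the first kind at `s = X + Y`, `p = X Y`.
Waring's formula expands `D_m(s, p)` as `∑ j, (-1) ^ j d(m, j) p ^ j s ^ (m - 2 j)` with natural
numbers `d(m, j) = m (m - j - 1)! / (j! (m - 2 j)!)`. For `k = m - 2 j = 2 r + 1` the product
`∏ (n² - (4l - 2)²) = ∏ 16 (a + 1 - l) (a + l)` equals `16 ^ r (a + r)! / (a - r)!`, so
`c_k = (-1) ^ (r + 1) d(m, j)`; this is Waring's sign `(-1) ^ j` because `a = j + r` is odd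
when `n ≡ 6 (mod 8)`.
-/

open Finset Polynomial Nat

theorem sum_range_two_mul {M : Type*} [AddCommMonoid M] (f : ℕ → M) (N : ℕ) :
    ∑ i ∈ range (2 * N), f i = ∑ j ∈ range N, (f (2 * j) + f (2 * j + 1)) := by
  induction N with
  | zero => simp
  | succ N ih =>
    rw [mul_add, mul_one, sum_range_succ, sum_range_succ, sum_range_succ, ih, add_assoc]

theorem sum_range_eq_sum_odd {M : Type*} [AddCommMonoid M] (f : ℕ → M) (a : ℕ)
    (hf : ∀ k ≤ 2 * a + 1, Even k → f k = 0) :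
    ∑ k ∈ range (2 * (a + 1)), f k = ∑ j ∈ range (a + 1), f (2 * a + 1 - 2 * j) := by
  rw [← sum_range_reflect, sum_range_two_mul]
  refine sum_congr rfl fun j hj => ?_
  rw [mem_range] at hj
  rw [hf (2 * (a + 1) - 1 - (2 * j + 1)) (by omega) (Nat.even_iff.mpr (by omega)), add_zero,
    show 2 * (a + 1) - 1 - 2 * j = 2 * a + 1 - 2 * j by omega]

theorem Polynomial.dickson_one_mul_eval_add {R : Type*} [CommRing R] (u v : R) :
    ∀ n, (dickson 1 (u * v) n).eval (u + v) = u ^ n + v ^ n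
  | 0 => by norm_num
  | 1 => by simp
  | n + 2 => by
    simp only [dickson_add_two, eval_sub, eval_mul, eval_X, eval_C,
      dickson_one_mul_eval_add u v n, dickson_one_mul_eval_add u v (n + 1)]
    ring

/-- The coefficient `m / (m - j) * (m - j).choose j` of `(-a) ^ j * X ^ (m - 2 * j)` in
`dickson 1 a m`, defined by the recursion inherited from `dickson_add_two`. -/
def dicksonCoeff : ℕ → ℕ → ℕ
  | 0, 0 => 2
  | _ + 1, 0 => 1
  | 0, _ + 1 => 0
  | 1, _ + 1 => 0
  | m + 2, j + 1 => dicksonCoeff (m + 1) (j + 1) + dicksonCoeff m j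

theorem dicksonCoeff_add_two_add_one (m j : ℕ) :
    dicksonCoeff (m + 2) (j + 1) = dicksonCoeff (m + 1) (j + 1) + dicksonCoeff m j := rfl

theorem dicksonCoeff_succ_zero (m : ℕ) : dicksonCoeff (m + 1) 0 = 1 := rfl

theorem dicksonCoeff_eq_zero_of_lt : ∀ {m j : ℕ}, m < 2 * j → dicksonCoeff m j = 0
  | 0, _ + 1, _ => rfl
  | 1, _ + 1, _ => rfl
  | m + 2, j + 1, h => by
    rw [dicksonCoeff_add_two_add_one, dicksonCoeff_eq_zero_of_lt (by omega),
      dicksonCoeff_eq_zero_of_lt (by omega)]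
  | _, 0, h => by omega

theorem dicksonCoeff_two_mul : ∀ j, dicksonCoeff (2 * j) j = 2
  | 0 => rfl
  | j + 1 => by
    rw [show 2 * (j + 1) = 2 * j + 2 by ring, dicksonCoeff_add_two_add_one,
      dicksonCoeff_eq_zero_of_lt (by omega), dicksonCoeff_two_mul j]

theorem dicksonCoeff_mul_factorial (j i : ℕ) :
    dicksonCoeff (2 * j + i + 1) j * (j ! * (i + 1)!) = (2 * j + i + 1) * (j + i)! := by
  induction j generalizing i with
  | zero => simp [dicksonCoeff_succ_zero, factorial_succ]
  | succ j ihj =>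
    induction i with
    | zero =>
      have h := ihj 0
      rw [show 2 * (j + 1) + 0 + 1 = (2 * j + 1) + 2 by ring, dicksonCoeff_add_two_add_one,
        show 2 * j + 1 + 1 = 2 * (j + 1) by ring, dicksonCoeff_two_mul]
      simp only [factorial_succ, add_zero] at h ⊢
      linear_combination (j + 1) * h
    | succ i ihi =>
      have h := ihj (i + 1)
      rw [show 2 * (j + 1) + (i + 1) + 1 = (2 * j + i + 2) + 2 by ring,
        dicksonCoeff_add_two_add_one, show 2 * j + i + 2 + 1 = 2 * (j + 1) + i + 1 by ring,
        show 2 * j + i + 2 = 2 * j + (i + 1) + 1 by ring,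
        show j + 1 + (i + 1) = j + i + 1 + 1 by ring]
      rw [show j + (i + 1) = j + i + 1 by ring] at h
      rw [show j + 1 + i = j + i + 1 by ring] at ihi
      simp only [factorial_succ] at h ihi ⊢
      linear_combination (i + 2) * ihi + (j + 1) * h

theorem Polynomial.eval_dickson_one {R : Type*} [CommRing R] (s p : R) :
    ∀ {m N : ℕ}, m < 2 * N → (dickson 1 p m).eval s =
      ∑ j ∈ range N, (-1) ^ j * dicksonCoeff m j * p ^ j * s ^ (m - 2 * j)
  | 0, N + 1, _ => by
    rw [sum_eq_single_of_mem 0 (by simp) fun j _ hj => by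
      rw [dicksonCoeff_eq_zero_of_lt (by omega)]; simp]
    norm_num [dicksonCoeff]
  | 1, N + 1, _ => by
    rw [sum_eq_single_of_mem 0 (by simp) fun j _ hj => by
      rw [dicksonCoeff_eq_zero_of_lt (by omega)]; simp]
    simp [dicksonCoeff_succ_zero]
  | m + 2, N + 1, h => by
    have step : ∀ j, (-1) ^ (j + 1) * (dicksonCoeff (m + 2) (j + 1) : R) * p ^ (j + 1) *
          s ^ (m + 2 - 2 * (j + 1)) =
        s * ((-1) ^ (j + 1) * dicksonCoeff (m + 1) (j + 1) * p ^ (j + 1) *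
          s ^ (m + 1 - 2 * (j + 1))) -
        p * ((-1) ^ j * dicksonCoeff m j * p ^ j * s ^ (m - 2 * j)) := by
      intro j
      rw [dicksonCoeff_add_two_add_one, show m + 2 - 2 * (j + 1) = m - 2 * j by omega]
      rcases lt_or_ge m (2 * j + 1) with hj | hj
      · rw [dicksonCoeff_eq_zero_of_lt (m := m + 1) (by omega)]
        push_cast
        ring
      · rw [show m - 2 * j = m + 1 - 2 * (j + 1) + 1 by omega]
        push_cast
        ring
    rw [dickson_add_two, eval_sub, eval_mul, eval_mul, eval_X, eval_C,
      eval_dickson_one s p (N := N + 1) (by omega), eval_dickson_one s p (N := N) (by omega),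
      sum_range_succ' _ N, sum_range_succ' _ N]
    simp only [step, sum_sub_distrib, dicksonCoeff_succ_zero, Nat.mul_zero, Nat.sub_zero]
    rw [mul_add, mul_sum, mul_sum]
    ring

theorem prod_sq_sub_sq_mul_factorial {a r : ℕ} (hr : r ≤ a) :
    (∏ l ∈ Icc 1 r, ((4 * a + 2 : ℚ) ^ 2 - (4 * (l : ℚ) - 2) ^ 2)) * ((a - r)! : ℚ) =
      16 ^ r * ((a + r)! : ℚ) := by
  induction r with
  | zero => simp
  | succ r ih =>
    obtain ⟨d, rfl⟩ : ∃ d, a = r + 1 + d := ⟨a - (r + 1), by omega⟩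
    have ih := ih (by omega)
    rw [show r + 1 + d - r = d + 1 by omega, show r + 1 + d + r = 2 * r + d + 1 by omega] at ih
    rw [prod_Icc_succ_top (by omega), show r + 1 + d - (r + 1) = d by omega,
      show r + 1 + d + (r + 1) = 2 * r + d + 1 + 1 by omega]
    simp only [factorial_succ] at ih ⊢
    push_cast at ih ⊢
    linear_combination (16 * (2 * r + d + 2 : ℚ)) * ih

theorem cast_dicksonCoeff_eq_prod_div {a r : ℕ} (hr : r ≤ a) :
    (dicksonCoeff (2 * a + 1) (a - r) : ℚ) = 2 * (4 * a + 2 : ℚ) *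
      (∏ l ∈ Icc 1 r, ((4 * a + 2 : ℚ) ^ 2 - (4 * (l : ℚ) - 2) ^ 2)) /
        (4 ^ (2 * r + 1) * (2 * r + 1)!) := by
  have hcoeff := dicksonCoeff_mul_factorial (a - r) (2 * r)
  rw [show 2 * (a - r) + 2 * r + 1 = 2 * a + 1 by omega,
    show a - r + 2 * r = a + r by omega] at hcoeff
  have hcoeff : (dicksonCoeff (2 * a + 1) (a - r) : ℚ) * ((a - r)! * (2 * r + 1)!) =
      (2 * a + 1) * (a + r)! := by exact_mod_cast hcoeff
  have h4 : (4 : ℚ) ^ (2 * r + 1) = 4 * 16 ^ r := by rw [pow_succ, pow_mul]; norm_num; ring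
  rw [eq_div_iff (by positivity), h4]
  refine mul_right_cancel₀ (b := ((a - r)! : ℚ)) (by positivity) ?_
  linear_combination (4 * 16 ^ r : ℚ) * hcoeff -
    2 * (4 * a + 2 : ℚ) * prod_sq_sub_sq_mul_factorial hr

theorem prod_div_eq_neg_one_pow_mul_dicksonCoeff {a j : ℕ} (ha : a % 2 = 1) (hj : j ≤ a) :
    2 * (-1 : ℚ) ^ ((2 * a + 1 - 2 * j - 1) / 2 + 1) * (4 * a + 2 : ℚ) *
      (∏ l ∈ Icc 1 ((2 * a + 1 - 2 * j - 1) / 2),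
        ((4 * a + 2 : ℚ) ^ 2 - (4 * (l : ℚ) - 2) ^ 2)) /
        (4 ^ (2 * a + 1 - 2 * j) * (2 * a + 1 - 2 * j)!) =
      (-1) ^ j * dicksonCoeff (2 * a + 1) j := by
  have h := cast_dicksonCoeff_eq_prod_div (a := a) (r := a - j) (by omega)
  rw [show a - (a - j) = j by omega] at h
  rw [show 2 * a + 1 - 2 * j = 2 * (a - j) + 1 by omega,
    show (2 * (a - j) + 1 - 1) / 2 = a - j by omega, neg_one_pow_eq_pow_mod_two,
    show (a - j + 1) % 2 = j % 2 by omega, ← neg_one_pow_eq_pow_mod_two, h]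
  ring

/-- The case `n ≡ 6 (mod 8)` of the Eight Levels Theorem. -/
theorem eight_levels_mod8_six (n : ℕ) (hn : n % 8 = 6) (c : ℕ → ℚ)
    (hc_even : ∀ k ≤ n / 2, k % 2 = 0 → c k = 0)
    (hc_odd : ∀ k ≤ n / 2, k % 2 = 1 →
      c k = 2 * (-1 : ℚ) ^ ((k - 1) / 2 + 1) * (n : ℚ) *
        (∏ l ∈ Finset.Icc 1 ((k - 1) / 2), ((n : ℚ) ^ 2 - (4 * (l : ℚ) - 2) ^ 2)) /
        (4 ^ k * (Nat.factorial k : ℚ))) :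
    (∀ k ≤ n / 2, ∃ z : ℤ, c k = (z : ℚ)) ∧
    ∀ x y : ℂ, x ^ n + y ^ n =
      ∑ k ∈ Finset.range (n / 2 + 1),
        (c k : ℂ) * (x * y) ^ (n / 2 - k) * (x ^ 2 + y ^ 2) ^ k := by
  obtain ⟨a, rfl⟩ : ∃ a, n = 4 * a + 2 := ⟨n / 4, by omega⟩
  rw [show (4 * a + 2) / 2 = 2 * a + 1 by omega] at hc_even hc_odd ⊢
  have hc : ∀ j ≤ a, c (2 * a + 1 - 2 * j) = (-1) ^ j * dicksonCoeff (2 * a + 1) j :=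
    fun j hj => by
      rw [hc_odd _ (by omega) (by omega),
        ← prod_div_eq_neg_one_pow_mul_dicksonCoeff (by omega) hj]
      push_cast
      rfl
  refine ⟨fun k hk => ?_, fun x y => ?_⟩
  · by_cases hk2 : k % 2 = 0
    · exact ⟨0, by simp [hc_even k hk hk2]⟩
    · obtain ⟨j, hj, rfl⟩ : ∃ j ≤ a, k = 2 * a + 1 - 2 * j :=
        ⟨(2 * a + 1 - k) / 2, by omega, by omega⟩
      exact ⟨(-1) ^ j * dicksonCoeff (2 * a + 1) j, by rw [hc j hj]; push_cast; rfl⟩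
  calc x ^ (4 * a + 2) + y ^ (4 * a + 2) = (x ^ 2) ^ (2 * a + 1) + (y ^ 2) ^ (2 * a + 1) := by
        ring
    _ = (dickson 1 (x ^ 2 * y ^ 2) (2 * a + 1)).eval (x ^ 2 + y ^ 2) :=
      (dickson_one_mul_eval_add _ _ _).symm
    _ = ∑ j ∈ range (a + 1), (-1) ^ j * dicksonCoeff (2 * a + 1) j * (x ^ 2 * y ^ 2) ^ j *
          (x ^ 2 + y ^ 2) ^ (2 * a + 1 - 2 * j) := eval_dickson_one _ _ (by omega)
    _ = _ := by
      rw [show 2 * a + 1 + 1 = 2 * (a + 1) by ring, sum_range_eq_sum_odd _ a fun k hk hk2 => by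
        simp [hc_even k hk (Nat.even_iff.mp hk2)]]
      refine sum_congr rfl fun j hj => ?_
      rw [mem_range] at hj
      rw [hc j (by omega), show 2 * a + 1 - (2 * a + 1 - 2 * j) = 2 * j by omega]
      push_cast
      ring
end

section
/- Let n be a natural number with n ≡ 1 (mod 8). For 0 ≤ k ≤ ⌊n/2⌋ define the rational numbers c_k = (−1)^(⌊k/2⌋) · (n + 1 − 2k)^(k mod 2) · (∏_{λ=1}^{⌊k/2⌋} ((n+1)² − (4λ−2)²)) / (4^k · k!) (the product being empty, hence 1, when ⌊k/2⌋ = 0). Then every c_k is an integer, and for all complex numbers x, y: x^n + y^n = (x + y) · ∑_{k=0}^{⌊n/2⌋} c_k · (x·y)^(⌊n/2⌋ − k) · (x² + y²)^k. -/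
/-! With `p = x y` and `q = x² + y²`, the squares `x²`, `y²` are the roots of `Z² - q Z + p²`, so
`f m = (x^(2m+1) + y^(2m+1)) / (x + y)` satisfies `f (m+2) = q f (m+1) - p² f m`, `f 0 = 1`,
`f 1 = q - p`. The signed binomials `(-1)^⌈i/2⌉ C(⌊i/2⌋ + k, k)` obey the matching Pascal rule, so
they are the coefficients of `p^i q^k` in `f m`. For `n = 4t + 1` the product in `c_k` telescopes
to `4^k (t + ⌊k/2⌋)! / (t - ⌈k/2⌉)!`, giving `c_k = (-1)^⌊k/2⌋ C(t + ⌊k/2⌋, k)`; for even `t` this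
is the coefficient of `p^(2t-k) q^k`. -/

open Finset

namespace EightLevels

def coeff (i k : ℕ) : ℤ := (-1) ^ ((i + 1) / 2) * ((i / 2 + k).choose k)

lemma coeff_add_two_succ (i k : ℕ) :
    coeff (i + 2) (k + 1) = coeff (i + 2) k - coeff i (k + 1) := by
  have hsign : (-1 : ℤ) ^ ((i + 2 + 1) / 2) = -(-1) ^ ((i + 1) / 2) := by
    rw [show (i + 2 + 1) / 2 = (i + 1) / 2 + 1 by omega, pow_succ, mul_neg_one]
  have hpascal : (i / 2 + 1 + (k + 1)).choose (k + 1)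
      = (i / 2 + 1 + k).choose k + (i / 2 + k + 1).choose (k + 1) := by
    rw [show i / 2 + 1 + (k + 1) = (i / 2 + k + 1) + 1 by ring, Nat.choose_succ_succ',
      show i / 2 + 1 + k = i / 2 + k + 1 by ring]
  rw [coeff, coeff, coeff, hsign, show (i + 2) / 2 = i / 2 + 1 by omega, hpascal,
    show i / 2 + (k + 1) = i / 2 + k + 1 by ring]
  push_cast
  ring

lemma coeff_add_two_zero (i : ℕ) : coeff (i + 2) 0 = -coeff i 0 := by
  simp [coeff, show (i + 2 + 1) / 2 = (i + 1) / 2 + 1 by omega, pow_succ]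

lemma coeff_succ_of_lt_two {i : ℕ} (hi : i < 2) (k : ℕ) : coeff i (k + 1) = coeff i k := by
  interval_cases i <;> simp [coeff]

variable {R : Type*} [CommRing R]

def quotient (p q : R) (m : ℕ) : R :=
  ∑ k ∈ range (m + 1), (coeff (m - k) k : R) * p ^ (m - k) * q ^ k

lemma quotient_zero (p q : R) : quotient p q 0 = 1 := by
  simp [quotient, coeff]

lemma quotient_one (p q : R) : quotient p q 1 = q - p := by
  simp [quotient, coeff, sum_range_succ]
  ring

lemma quotient_add_two (p q : R) (m : ℕ) :
    quotient p q (m + 2) = q * quotient p q (m + 1) - p ^ 2 * quotient p q m := by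
  -- `p^i q^(k+1)` on the left is matched with `p^i q^k` of `quotient p q (m + 1)` and
  -- `p^(i-2) q^(k+1)` of `quotient p q m`; left over are the terms with `i < 2` and `p^(m+2)`
  have hinterior : ∑ k ∈ range m,
        (coeff (m + 2 - (k + 1)) (k + 1) : R) * p ^ (m + 2 - (k + 1)) * q ^ (k + 1)
      = ∑ k ∈ range m, (q * ((coeff (m + 1 - k) k : R) * p ^ (m + 1 - k) * q ^ k)
        - p ^ 2 * ((coeff (m - (k + 1)) (k + 1) : R) * p ^ (m - (k + 1)) * q ^ (k + 1))) := by
    refine sum_congr rfl fun k hk => ?_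
    obtain ⟨i, rfl⟩ : ∃ i, m = i + k + 1 := ⟨m - (k + 1), by have := mem_range.1 hk; omega⟩
    rw [show i + k + 1 + 2 - (k + 1) = i + 2 by omega, show i + k + 1 + 1 - k = i + 2 by omega,
      show i + k + 1 - (k + 1) = i by omega, coeff_add_two_succ]
    push_cast
    ring
  rw [quotient, quotient, quotient, sum_range_succ', sum_range_succ, sum_range_succ, hinterior,
    sum_sub_distrib, ← mul_sum, ← mul_sum, sum_range_succ (n := m + 1), sum_range_succ,
    sum_range_succ' (n := m)]
  simp only [show m + 2 - (m + 1) = 1 by omega, show m + 2 - (m + 1 + 1) = 0 by omega,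
    show m + 1 - m = 1 by omega, Nat.sub_self, Nat.sub_zero,
    coeff_add_two_zero, coeff_succ_of_lt_two (show 1 < 2 by norm_num),
    coeff_succ_of_lt_two (show 0 < 2 by norm_num)]
  push_cast
  ring

theorem pow_add_pow_eq_mul_quotient (x y : R) (m : ℕ) :
    x ^ (2 * m + 1) + y ^ (2 * m + 1) = (x + y) * quotient (x * y) (x ^ 2 + y ^ 2) m := by
  induction m using Nat.twoStepInduction with
  | zero => simp [quotient_zero]
  | one => rw [quotient_one]; ring
  | more m ih₀ ih₁ =>
    rw [quotient_add_two]
    linear_combination (x ^ 2 + y ^ 2) * ih₁ - (x * y) ^ 2 * ih₀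

lemma prod_sq_sub_sq_eq_descFactorial {t j : ℕ} (hj : j ≤ t) :
    ∏ l ∈ Icc 1 j, ((4 * t + 2 : R) ^ 2 - (4 * l - 2) ^ 2)
      = 16 ^ j * ((t + j).descFactorial (2 * j) : R) := by
  induction j with
  | zero => simp
  | succ j ih =>
    rw [prod_Icc_succ_top (by omega), ih (by omega), show t + (j + 1) = t + j + 1 by ring,
      show 2 * (j + 1) = 2 * j + 1 + 1 by ring, Nat.succ_descFactorial_succ, Nat.descFactorial_succ,
      show t + j - 2 * j = t - j by omega]
    push_cast [Nat.cast_sub (show j ≤ t by omega)]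
    ring

lemma pow_mul_prod_sq_sub_sq_eq_descFactorial {t k : ℕ} (hk : k ≤ 2 * t) :
    (4 * t + 2 - 2 * k : R) ^ (k % 2) *
        ∏ l ∈ Icc 1 (k / 2), ((4 * t + 2 : R) ^ 2 - (4 * l - 2) ^ 2)
      = 4 ^ k * ((t + k / 2).descFactorial k : R) := by
  rcases Nat.even_or_odd' k with ⟨j, rfl | rfl⟩
  · rw [show 2 * j / 2 = j by omega, Nat.mul_mod_right, pow_zero, one_mul,
      prod_sq_sub_sq_eq_descFactorial (by omega), pow_mul]
    norm_num
  · rw [show (2 * j + 1) / 2 = j by omega, show (2 * j + 1) % 2 = 1 by omega, pow_one,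
      prod_sq_sub_sq_eq_descFactorial (by omega), Nat.descFactorial_succ,
      show t + j - 2 * j = t - j by omega, pow_succ, pow_mul]
    push_cast [Nat.cast_sub (show j ≤ t by omega)]
    ring

lemma coeff_formula_eq_choose {n t k : ℕ} (hn : n = 4 * t + 1) (hk : k ≤ 2 * t) :
    (-1 : ℚ) ^ (k / 2) * ((n : ℚ) + 1 - 2 * (k : ℚ)) ^ (k % 2) *
        (∏ l ∈ Icc 1 (k / 2), (((n : ℚ) + 1) ^ 2 - (4 * (l : ℚ) - 2) ^ 2)) /
        (4 ^ k * (k.factorial : ℚ))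
      = (-1) ^ (k / 2) * ((t + k / 2).choose k : ℚ) := by
  have hn' : (n : ℚ) + 1 = 4 * t + 2 := by rw [hn]; push_cast; ring
  rw [hn', mul_assoc _ (_ ^ (k % 2)), pow_mul_prod_sq_sub_sq_eq_descFactorial hk,
    Nat.descFactorial_eq_factorial_mul_choose]
  have : (k.factorial : ℚ) ≠ 0 := by positivity
  push_cast
  field_simp

lemma coeff_two_mul_sub {t k : ℕ} (hk : k ≤ 2 * t) :
    coeff (2 * t - k) k = (-1) ^ (t + k / 2) * ((t + k / 2).choose k : ℤ) := by
  rw [coeff, show (2 * t - k) / 2 + k = t + k / 2 by omega,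
    show t + k / 2 = (2 * t - k + 1) / 2 + 2 * (k / 2) by omega, pow_add, pow_mul]
  simp

end EightLevels

/-- The case `n ≡ 1 (mod 8)` of the Eight Levels Theorem. -/
theorem eight_levels_mod8_one (n : ℕ) (hn : n % 8 = 1) (c : ℕ → ℚ)
    (hc : ∀ k ≤ n / 2,
      c k = (-1 : ℚ) ^ (k / 2) * ((n : ℚ) + 1 - 2 * (k : ℚ)) ^ (k % 2) *
        (∏ l ∈ Finset.Icc 1 (k / 2), (((n : ℚ) + 1) ^ 2 - (4 * (l : ℚ) - 2) ^ 2)) /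
        (4 ^ k * (Nat.factorial k : ℚ))) :
    (∀ k ≤ n / 2, ∃ z : ℤ, c k = (z : ℚ)) ∧
    ∀ x y : ℂ, x ^ n + y ^ n =
      (x + y) * ∑ k ∈ Finset.range (n / 2 + 1),
        (c k : ℂ) * (x * y) ^ (n / 2 - k) * (x ^ 2 + y ^ 2) ^ k := by
  obtain ⟨u, rfl⟩ : ∃ u, n = 8 * u + 1 := ⟨n / 8, by omega⟩
  have hhalf : (8 * u + 1) / 2 = 2 * (2 * u) := by omega
  have hcoeff : ∀ k ≤ 2 * (2 * u), c k = EightLevels.coeff (2 * (2 * u) - k) k := by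
    intro k hk
    rw [hc k (by omega), EightLevels.coeff_formula_eq_choose (t := 2 * u) (by ring) hk,
      EightLevels.coeff_two_mul_sub hk, pow_add, pow_mul]
    simp
  rw [hhalf]
  refine ⟨fun k hk => ⟨_, hcoeff k hk⟩, fun x y => ?_⟩
  rw [show 8 * u + 1 = 2 * (2 * (2 * u)) + 1 by ring, EightLevels.pow_add_pow_eq_mul_quotient,
    EightLevels.quotient]
  congr 1
  refine sum_congr rfl fun k hk => ?_
  rw [hcoeff k (Nat.lt_succ_iff.1 (mem_range.1 hk))]
  push_cast
  rfl
end

section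
/- Let n be a natural number with n ≡ 3 (mod 8). Define rational numbers c_k for 0 ≤ k ≤ ⌊n/2⌋ by: c_0 = −1, and for 1 ≤ k ≤ ⌊n/2⌋, c_k = (−1)^(⌊k/2⌋ + ((k−1) mod 2)) · (n+1) · (n + 1 − 2k)^((k−1) mod 2) · (∏_{λ=1}^{⌊(k−1)/2⌋} ((n+1)² − (4λ)²)) / (4^k · k!) (the product being empty, hence 1, when ⌊(k−1)/2⌋ = 0). Then every c_k is an integer, and for all complex numbers x, y: x^n + y^n = (x + y) · ∑_{k=0}^{⌊n/2⌋} c_k · (x·y)^(⌊n/2⌋ − k) · (x² + y²)^k. -/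
/-! Put `p = xy` and `s = x² + y²`. The quotients `Q m = (x^(2m+1) + y^(2m+1)) / (x + y)` satisfy
`Q (m + 2) = s Q (m + 1) - p² Q m`, and by Pascal's rule this recurrence is solved by
`Q m = ∑ₖ (-1)^⌊(m+1-k)/2⌋ C(⌊(m+k)/2⌋, k) p^(m-k) s^k`.
For `n = 4N - 1` the product in `c_k` is, up to `4^k`, the falling factorial of length `k`
starting at `N + ⌊(k-1)/2⌋`, so `c_k` is this signed binomial coefficient for `m = ⌊n/2⌋`; the
signs agree exactly when `N` is odd, i.e. `n ≡ 3 (mod 8)`. -/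

open Finset Polynomial

namespace EightLevels

def oddPowQuotCoeff (m k : ℕ) : ℤ := (-1) ^ ((m + 1 - k) / 2) * ((m + k) / 2).choose k

lemma oddPowQuotCoeff_eq_zero_of_lt {m k : ℕ} (h : m < k) : oddPowQuotCoeff m k = 0 := by
  rw [oddPowQuotCoeff, Nat.choose_eq_zero_of_lt (by omega), Nat.cast_zero, mul_zero]

lemma oddPowQuotCoeff_add_two_zero (m : ℕ) :
    oddPowQuotCoeff (m + 2) 0 = -oddPowQuotCoeff m 0 := by
  simp only [oddPowQuotCoeff, show (m + 2 + 1 - 0) / 2 = (m + 1 - 0) / 2 + 1 by omega, pow_succ,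
    Nat.choose_zero_right]
  ring

/-- Pascal's rule: the first two coefficients carry the same sign and the third the opposite
one, unless it vanishes. -/
lemma oddPowQuotCoeff_add_two_succ (m k : ℕ) :
    oddPowQuotCoeff (m + 2) (k + 1) = oddPowQuotCoeff (m + 1) k - oddPowQuotCoeff m (k + 1) := by
  set q := (m + k + 1) / 2
  have hpascal : ((m + 2 + (k + 1)) / 2).choose (k + 1) = q.choose k + q.choose (k + 1) := by
    rw [show (m + 2 + (k + 1)) / 2 = q + 1 by omega, Nat.choose_succ_succ]
  have hsign : m + 2 + 1 - (k + 1) = m + 1 + 1 - k := by omega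
  simp only [oddPowQuotCoeff, hpascal, hsign, show (m + 1 + k) / 2 = q by omega,
    show (m + (k + 1)) / 2 = q by omega]
  rcases le_or_gt k m with hkm | hkm
  · rw [show (m + 1 + 1 - k) / 2 = (m + 1 - (k + 1)) / 2 + 1 by omega, pow_succ]
    push_cast
    ring
  · rw [Nat.choose_eq_zero_of_lt (show q < k + 1 by omega)]
    push_cast
    ring

section

variable {R : Type*} [CommRing R]

def oddPowQuot (m : ℕ) (p s : R) : R :=
  ∑ k ∈ range (m + 1), (oddPowQuotCoeff m k : R) * p ^ (m - k) * s ^ k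

lemma oddPowQuot_eq_sum_range_of_le (m : ℕ) (p s : R) {M : ℕ} (hM : m + 1 ≤ M) :
    oddPowQuot m p s = ∑ k ∈ range M, (oddPowQuotCoeff m k : R) * p ^ (m - k) * s ^ k := by
  refine sum_subset (range_subset_range.mpr hM) fun k _ hk => ?_
  rw [oddPowQuotCoeff_eq_zero_of_lt (by simpa using hk), Int.cast_zero, zero_mul, zero_mul]

lemma oddPowQuot_add_two (m : ℕ) (p s : R) :
    oddPowQuot (m + 2) p s = s * oddPowQuot (m + 1) p s - p ^ 2 * oddPowQuot m p s := by
  have hterm : ∀ k, (oddPowQuotCoeff (m + 2) (k + 1) : R) * p ^ (m + 2 - (k + 1)) * s ^ (k + 1) =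
      s * ((oddPowQuotCoeff (m + 1) k : R) * p ^ (m + 1 - k) * s ^ k) -
        p ^ 2 * ((oddPowQuotCoeff m (k + 1) : R) * p ^ (m - (k + 1)) * s ^ (k + 1)) := by
    intro k
    rw [oddPowQuotCoeff_add_two_succ, Int.cast_sub]
    rcases le_or_gt (k + 1) m with hkm | hkm
    · rw [show m + 2 - (k + 1) = m - (k + 1) + 2 by omega,
        show m + 1 - k = m - (k + 1) + 2 by omega]
      ring
    · rw [oddPowQuotCoeff_eq_zero_of_lt hkm, show m + 1 - k = m + 2 - (k + 1) by omega]
      ring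
  rw [oddPowQuot, oddPowQuot_eq_sum_range_of_le m p s (M := m + 2 + 1) (by omega)]
  simp only [sum_range_succ' _ (m + 2), hterm, sum_sub_distrib, oddPowQuotCoeff_add_two_zero,
    oddPowQuot, mul_add, mul_sum, Nat.sub_zero]
  push_cast
  ring

theorem pow_odd_add_pow_odd_eq_mul_oddPowQuot (m : ℕ) (x y : R) :
    x ^ (2 * m + 1) + y ^ (2 * m + 1) = (x + y) * oddPowQuot m (x * y) (x ^ 2 + y ^ 2) := by
  induction m using Nat.twoStepInduction with
  | zero => simp [oddPowQuot, oddPowQuotCoeff]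
  | one =>
    rw [oddPowQuot, sum_range_succ, sum_range_one, show oddPowQuotCoeff 1 0 = -1 by decide,
      show oddPowQuotCoeff 1 1 = 1 by decide]
    push_cast
    ring
  | more m ih₀ ih₁ =>
    rw [oddPowQuot_add_two]
    linear_combination (x ^ 2 + y ^ 2) * ih₁ - (x * y) ^ 2 * ih₀

lemma mul_prod_sq_sub_sq_eq_descPochhammer (X : R) (j : ℕ) :
    X * ∏ l ∈ Icc 1 j, (X ^ 2 - (l : R) ^ 2) = (descPochhammer R (2 * j + 1)).eval (X + j) := by
  induction j with
  | zero => simp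
  | succ j ih =>
    have hshift : (descPochhammer R (2 * (j + 1) + 1)).eval (X + (j + 1 : ℕ)) =
        (X + j + 1) * (descPochhammer R (2 * j + 1 + 1)).eval (X + j) := by
      rw [show 2 * (j + 1) + 1 = 2 * j + 1 + 1 + 1 by ring, descPochhammer_succ_left, eval_mul,
        eval_X, eval_comp, eval_sub, eval_X, eval_one]
      push_cast
      ring_nf
    rw [hshift, descPochhammer_succ_eval, prod_Icc_succ_top (by omega), ← mul_assoc, ih]
    push_cast
    ring

lemma four_mul_prod_eq_descPochhammer (X : R) {k : ℕ} (hk : 1 ≤ k) :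
    4 * X * (4 * X - 2 * k) ^ ((k - 1) % 2) *
        ∏ l ∈ Icc 1 ((k - 1) / 2), ((4 * X) ^ 2 - (4 * (l : R)) ^ 2) =
      4 ^ k * (descPochhammer R k).eval (X + ((k - 1) / 2 : ℕ)) := by
  have hprod : ∀ j : ℕ, ∏ l ∈ Icc 1 j, ((4 * X) ^ 2 - (4 * ((l : ℕ) : R)) ^ 2) =
      4 ^ (2 * j) * ∏ l ∈ Icc 1 j, (X ^ 2 - ((l : ℕ) : R) ^ 2) := by
    intro j
    simp_rw [show ∀ l : R, (4 * X) ^ 2 - (4 * l) ^ 2 = 4 ^ 2 * (X ^ 2 - l ^ 2) by intro; ring]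
    rw [prod_mul_distrib, prod_const, Nat.card_Icc, Nat.add_sub_cancel, pow_mul]
  obtain ⟨j, rfl | rfl⟩ : ∃ j, k = 2 * j + 1 ∨ k = 2 * j + 2 := ⟨(k - 1) / 2, by omega⟩
  · rw [show (2 * j + 1 - 1) % 2 = 0 by omega, show (2 * j + 1 - 1) / 2 = j by omega, hprod,
      ← mul_prod_sq_sub_sq_eq_descPochhammer]
    ring
  · rw [show (2 * j + 2 - 1) % 2 = 1 by omega, show (2 * j + 2 - 1) / 2 = j by omega, hprod,
      descPochhammer_succ_eval, ← mul_prod_sq_sub_sq_eq_descPochhammer]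
    push_cast
    ring

end

lemma oddPowQuotCoeff_half_zero_of_mod_eight_eq_three {n : ℕ} (hn : n % 8 = 3) :
    oddPowQuotCoeff (n / 2) 0 = -1 := by
  rw [oddPowQuotCoeff, neg_one_pow_eq_pow_mod_two, show (n / 2 + 1 - 0) / 2 % 2 = 1 by omega]
  simp

lemma coeff_formula_eq_oddPowQuotCoeff {n k : ℕ} (hn : n % 8 = 3) (hk1 : 1 ≤ k)
    (hk : k ≤ n / 2) :
    (-1 : ℚ) ^ (k / 2 + (k - 1) % 2) * ((n : ℚ) + 1) *
        ((n : ℚ) + 1 - 2 * (k : ℚ)) ^ ((k - 1) % 2) *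
        (∏ l ∈ Icc 1 ((k - 1) / 2), (((n : ℚ) + 1) ^ 2 - (4 * (l : ℚ)) ^ 2)) /
        (4 ^ k * (k.factorial : ℚ)) = oddPowQuotCoeff (n / 2) k := by
  set N := (n + 1) / 4
  have hN : (n : ℚ) + 1 = 4 * N := by exact_mod_cast (show n + 1 = 4 * N by omega)
  have hsign : (-1 : ℚ) ^ (k / 2 + (k - 1) % 2) = (-1) ^ ((n / 2 + 1 - k) / 2) := by
    have hparity : (k / 2 + (k - 1) % 2) % 2 = (n / 2 + 1 - k) / 2 % 2 := by
      obtain ⟨j, rfl | rfl⟩ : ∃ j, k = 2 * j + 1 ∨ k = 2 * j + 2 := ⟨(k - 1) / 2, by omega⟩ <;>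
        omega
    rw [neg_one_pow_eq_pow_mod_two, hparity, ← neg_one_pow_eq_pow_mod_two]
  have hdesc : (descPochhammer ℚ k).eval ((N : ℚ) + ((k - 1) / 2 : ℕ)) =
      k.factorial * ((n / 2 + k) / 2).choose k := by
    rw [← Nat.cast_add, descPochhammer_eval_eq_descFactorial,
      Nat.descFactorial_eq_factorial_mul_choose,
      show N + (k - 1) / 2 = (n / 2 + k) / 2 by omega]
    push_cast
    ring
  rw [hsign, hN, mul_assoc _ (4 * (N : ℚ)), mul_assoc, four_mul_prod_eq_descPochhammer _ hk1,
    hdesc, oddPowQuotCoeff]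
  field_simp
  push_cast
  ring

end EightLevels

open EightLevels

/-- The case `n ≡ 3 (mod 8)` of the Eight Levels Theorem. -/
theorem eight_levels_mod8_three (n : ℕ) (hn : n % 8 = 3) (c : ℕ → ℚ)
    (hc0 : c 0 = -1)
    (hc : ∀ k, 1 ≤ k → k ≤ n / 2 →
      c k = (-1 : ℚ) ^ (k / 2 + (k - 1) % 2) * ((n : ℚ) + 1) *
        ((n : ℚ) + 1 - 2 * (k : ℚ)) ^ ((k - 1) % 2) *
        (∏ l ∈ Finset.Icc 1 ((k - 1) / 2), (((n : ℚ) + 1) ^ 2 - (4 * (l : ℚ)) ^ 2)) /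
        (4 ^ k * (Nat.factorial k : ℚ))) :
    (∀ k ≤ n / 2, ∃ z : ℤ, c k = (z : ℚ)) ∧
    ∀ x y : ℂ, x ^ n + y ^ n =
      (x + y) * ∑ k ∈ Finset.range (n / 2 + 1),
        (c k : ℂ) * (x * y) ^ (n / 2 - k) * (x ^ 2 + y ^ 2) ^ k := by
  have hc_eq : ∀ k ≤ n / 2, c k = oddPowQuotCoeff (n / 2) k := by
    intro k hk
    rcases Nat.eq_zero_or_pos k with rfl | hk1
    · rw [hc0, oddPowQuotCoeff_half_zero_of_mod_eight_eq_three hn, Int.cast_neg, Int.cast_one]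
    · rw [hc k hk1 hk, coeff_formula_eq_oddPowQuotCoeff hn hk1 hk]
  refine ⟨fun k hk => ⟨_, hc_eq k hk⟩, fun x y => ?_⟩
  calc x ^ n + y ^ n = x ^ (2 * (n / 2) + 1) + y ^ (2 * (n / 2) + 1) := by
        rw [show 2 * (n / 2) + 1 = n by omega]
    _ = (x + y) * oddPowQuot (n / 2) (x * y) (x ^ 2 + y ^ 2) :=
        pow_odd_add_pow_odd_eq_mul_oddPowQuot _ x y
    _ = _ := by
      refine congrArg _ (Finset.sum_congr rfl fun k hk => ?_)
      rw [hc_eq k (Nat.lt_succ_iff.mp (Finset.mem_range.mp hk))]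
      norm_cast
end

section
/- Let n be a natural number with n ≡ 5 (mod 8). For 0 ≤ k ≤ ⌊n/2⌋ define the rational numbers c_k = (−1)^(⌊k/2⌋ + 1) · (n + 1 − 2k)^(k mod 2) · (∏_{λ=1}^{⌊k/2⌋} ((n+1)² − (4λ−2)²)) / (4^k · k!) (the product being empty, hence 1, when ⌊k/2⌋ = 0). Then every c_k is an integer, and for all complex numbers x, y: x^n + y^n = (x + y) · ∑_{k=0}^{⌊n/2⌋} c_k · (x·y)^(⌊n/2⌋ − k) · (x² + y²)^k. -/
/-!
With `p = xy` and `s = x² + y²`, the quotients `F_j = (x^(2j+1) + y^(2j+1)) / (x + y)` satisfy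
`F_(j+2) = s F_(j+1) - p² F_j` with `F_0 = 1`, `F_1 = s - p`. The numbers
`(-1)^⌈(j-k)/2⌉ * C(⌊(j+k)/2⌋, k)` obey the matching Pascal-type recurrence, so they are the
coefficients of `F_j` in the monomials `p^(j-k) s^k`. For `n = 8t + 5` we have `⌊n/2⌋ = 2B` with
`B = 2t + 1` and `n + 1 = 4B + 2`, so the factors of the product in `c_k` are
`(4B+2)² - (4l-2)² = 16 (B + 1 - l)(B + l)`; it telescopes into factorials and
`c_k = (-1)^(⌊k/2⌋+1) * C(B + ⌊k/2⌋, k)`, which is that coefficient for `j = 2B` because `B` is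
odd.
-/

open Finset

def oddPowSumCoeff (j k : ℕ) : ℤ := (-1) ^ ((j + 1 - k) / 2) * ((j + k) / 2).choose k

namespace oddPowSumCoeff

lemma eq_zero_of_lt {j k : ℕ} (h : j < k) : oddPowSumCoeff j k = 0 := by
  rw [oddPowSumCoeff, Nat.choose_eq_zero_of_lt (by omega), Nat.cast_zero, mul_zero]

lemma add_two_zero (j : ℕ) : oddPowSumCoeff (j + 2) 0 = -oddPowSumCoeff j 0 := by
  simp only [oddPowSumCoeff, Nat.choose_zero_right, Nat.cast_one, mul_one,
    show (j + 2 + 1 - 0) / 2 = (j + 1 - 0) / 2 + 1 by omega, pow_succ, mul_neg_one]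

lemma add_two_succ (j k : ℕ) :
    oddPowSumCoeff (j + 2) (k + 1) = oddPowSumCoeff (j + 1) k - oddPowSumCoeff j (k + 1) := by
  have hM : (j + 2 + (k + 1)) / 2 = (j + k + 1) / 2 + 1 := by omega
  simp only [oddPowSumCoeff, hM, Nat.choose_succ_succ',
    show j + 2 + 1 - (k + 1) = j + 1 + 1 - k by omega,
    show (j + 1 + k) / 2 = (j + k + 1) / 2 by omega, show j + (k + 1) = j + k + 1 by omega]
  rcases le_or_gt k j with hkj | hjk
  · rw [show (j + 1 + 1 - k) / 2 = (j + 1 - (k + 1)) / 2 + 1 by omega, pow_succ]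
    push_cast
    ring
  · rw [Nat.choose_eq_zero_of_lt (show (j + k + 1) / 2 < k + 1 by omega)]
    simp

end oddPowSumCoeff

section

variable {R : Type*} [CommRing R]

lemma sum_oddPowSumCoeff_add_two (p s : R) (j : ℕ) :
    ∑ k ∈ range (j + 3), (oddPowSumCoeff (j + 2) k : R) * p ^ (j + 2 - k) * s ^ k =
      s * ∑ k ∈ range (j + 2), (oddPowSumCoeff (j + 1) k : R) * p ^ (j + 1 - k) * s ^ k -
        p ^ 2 * ∑ k ∈ range (j + 1), (oddPowSumCoeff j k : R) * p ^ (j - k) * s ^ k := by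
  have hshift :
      s * ∑ k ∈ range (j + 2), (oddPowSumCoeff (j + 1) k : R) * p ^ (j + 1 - k) * s ^ k =
        ∑ k ∈ range (j + 2),
          (oddPowSumCoeff (j + 1) k : R) * p ^ (j + 2 - (k + 1)) * s ^ (k + 1) := by
    rw [mul_sum]
    refine sum_congr rfl fun k _ => ?_
    rw [show j + 2 - (k + 1) = j + 1 - k by omega]
    ring
  have hpad : p ^ 2 * ∑ k ∈ range (j + 1), (oddPowSumCoeff j k : R) * p ^ (j - k) * s ^ k =
      ∑ k ∈ range (j + 3), (oddPowSumCoeff j k : R) * p ^ (j + 2 - k) * s ^ k := by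
    rw [sum_range_succ _ (j + 2), sum_range_succ _ (j + 1), oddPowSumCoeff.eq_zero_of_lt (by omega),
      oddPowSumCoeff.eq_zero_of_lt (by omega : j < j + 2), mul_sum]
    simp only [Int.cast_zero, zero_mul, add_zero]
    refine sum_congr rfl fun k hk => ?_
    rw [show j + 2 - k = j - k + 2 by have := mem_range.mp hk; omega, pow_add]
    ring
  rw [hshift, hpad, sum_range_succ' _ (j + 2), sum_range_succ' _ (j + 2), ← sub_sub,
    ← sum_sub_distrib, oddPowSumCoeff.add_two_zero]
  simp only [oddPowSumCoeff.add_two_succ, Int.cast_sub, Int.cast_neg, sub_mul]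
  ring

theorem pow_add_pow_odd_eq_mul_sum (x y : R) (j : ℕ) :
    x ^ (2 * j + 1) + y ^ (2 * j + 1) = (x + y) * ∑ k ∈ range (j + 1),
      (oddPowSumCoeff j k : R) * (x * y) ^ (j - k) * (x ^ 2 + y ^ 2) ^ k := by
  induction j using Nat.twoStepInduction with
  | zero => simp [oddPowSumCoeff]
  | one =>
    rw [sum_range_succ, sum_range_one, show oddPowSumCoeff 1 0 = -1 by decide,
      show oddPowSumCoeff 1 1 = 1 by decide]
    push_cast
    ring
  | more j ih₀ ih₁ =>
    rw [sum_oddPowSumCoeff_add_two, mul_sub, ← mul_assoc, mul_comm (x + y), mul_assoc, ← ih₁,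
      mul_left_comm, ← ih₀]
    ring

end

lemma factorial_mul_prod_sq_sub_sq {B i : ℕ} (h : i ≤ B) :
    ((B - i).factorial : ℚ) *
        ∏ l ∈ Icc 1 i, ((4 * (B : ℚ) + 2) ^ 2 - (4 * (l : ℚ) - 2) ^ 2) =
      16 ^ i * ((B + i).factorial : ℚ) := by
  induction i with
  | zero => simp
  | succ i ih =>
    obtain ⟨d, rfl⟩ : ∃ d, B = i + 1 + d := ⟨B - (i + 1), by omega⟩
    have ih := ih (by omega)
    rw [show i + 1 + d - i = d + 1 by omega, Nat.factorial_succ] at ih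
    rw [prod_Icc_succ_top (by omega), show i + 1 + d - (i + 1) = d by omega,
      show i + 1 + d + (i + 1) = i + 1 + d + i + 1 by omega, Nat.factorial_succ]
    push_cast at ih ⊢
    linear_combination (16 * (2 * (i : ℚ) + d + 2)) * ih

lemma mul_prod_sq_sub_sq_div_eq_choose {B k : ℕ} (hk : k ≤ 2 * B) :
    (4 * (B : ℚ) + 2 - 2 * k) ^ (k % 2) *
        (∏ l ∈ Icc 1 (k / 2), ((4 * (B : ℚ) + 2) ^ 2 - (4 * (l : ℚ) - 2) ^ 2)) /
        (4 ^ k * (k.factorial : ℚ)) = ((B + k / 2).choose k : ℚ) := by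
  obtain ⟨i, rfl | rfl⟩ : ∃ i, k = 2 * i ∨ k = 2 * i + 1 := ⟨k / 2, by omega⟩
  · have hprod := factorial_mul_prod_sq_sub_sq (B := B) (i := i) (by omega)
    rw [show 2 * i % 2 = 0 by omega, show 2 * i / 2 = i by omega,
      Nat.cast_choose ℚ (show 2 * i ≤ B + i by omega), show B + i - 2 * i = B - i by omega,
      pow_mul]
    field_simp
    linear_combination hprod
  · obtain ⟨d, rfl⟩ : ∃ d, B = i + 1 + d := ⟨B - (i + 1), by omega⟩
    have hprod := factorial_mul_prod_sq_sub_sq (B := i + 1 + d) (i := i) (by omega)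
    rw [show i + 1 + d - i = d + 1 by omega, Nat.factorial_succ] at hprod
    rw [show (2 * i + 1) % 2 = 1 by omega, show (2 * i + 1) / 2 = i by omega,
      Nat.cast_choose ℚ (show 2 * i + 1 ≤ i + 1 + d + i by omega),
      show i + 1 + d + i - (2 * i + 1) = d by omega, pow_succ (4 : ℚ), pow_mul]
    field_simp
    push_cast at hprod ⊢
    linear_combination 4 * hprod

/-- The case `n ≡ 5 (mod 8)` of the Eight Levels Theorem. -/
theorem eight_levels_mod8_five (n : ℕ) (hn : n % 8 = 5) (c : ℕ → ℚ)
    (hc : ∀ k ≤ n / 2,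
      c k = (-1 : ℚ) ^ (k / 2 + 1) * ((n : ℚ) + 1 - 2 * (k : ℚ)) ^ (k % 2) *
        (∏ l ∈ Finset.Icc 1 (k / 2), (((n : ℚ) + 1) ^ 2 - (4 * (l : ℚ) - 2) ^ 2)) /
        (4 ^ k * (Nat.factorial k : ℚ))) :
    (∀ k ≤ n / 2, ∃ z : ℤ, c k = (z : ℚ)) ∧
    ∀ x y : ℂ, x ^ n + y ^ n =
      (x + y) * ∑ k ∈ Finset.range (n / 2 + 1),
        (c k : ℂ) * (x * y) ^ (n / 2 - k) * (x ^ 2 + y ^ 2) ^ k := by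
  obtain ⟨t, rfl⟩ : ∃ t, n = 8 * t + 5 := ⟨n / 8, by omega⟩
  have hhalf : (8 * t + 5) / 2 = 2 * (2 * t + 1) := by omega
  have hN : ((8 * t + 5 : ℕ) : ℚ) + 1 = 4 * ((2 * t + 1 : ℕ) : ℚ) + 2 := by push_cast; ring
  have hcoeff : ∀ k ≤ 2 * (2 * t + 1), c k = oddPowSumCoeff (2 * (2 * t + 1)) k := by
    intro k hk
    rw [hc k (hhalf ▸ hk), hN, mul_assoc, mul_div_assoc, mul_prod_sq_sub_sq_div_eq_choose hk,
      oddPowSumCoeff, show (2 * (2 * t + 1) + k) / 2 = 2 * t + 1 + k / 2 by omega]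
    push_cast
    congr 1
    exact neg_one_pow_congr (by simp only [Nat.even_iff]; omega)
  refine ⟨fun k hk => ⟨_, hcoeff k (hhalf ▸ hk)⟩, fun x y => ?_⟩
  rw [hhalf, sum_congr rfl fun k hk => by rw [hcoeff k (Nat.lt_succ_iff.mp (mem_range.mp hk))],
    show 8 * t + 5 = 2 * (2 * (2 * t + 1)) + 1 by ring]
  exact_mod_cast pow_add_pow_odd_eq_mul_sum x y _
end

section
/- Let n be a natural number with n ≡ 7 (mod 8). Define rational numbers c_k for 0 ≤ k ≤ ⌊n/2⌋ by: c_0 = 1, and for 1 ≤ k ≤ ⌊n/2⌋, c_k = (−1)^(⌊k/2⌋ + (k mod 2)) · (n+1) · (n + 1 − 2k)^((k−1) mod 2) · (∏_{λ=1}^{⌊(k−1)/2⌋} ((n+1)² − (4λ)²)) / (4^k · k!) (the product being empty, hence 1, when ⌊(k−1)/2⌋ = 0). Then every c_k is an integer, and for all complex numbers x, y: x^n + y^n = (x + y) · ∑_{k=0}^{⌊n/2⌋} c_k · (x·y)^(⌊n/2⌋ − k) · (x² + y²)^k. -/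
def EL : ℕ → ℕ → ℤ
  | 0, 0 => 1
  | 0, _+1 => 0
  | 1, 0 => -1
  | 1, 1 => 1
  | 1, _+2 => 0
  | (m+2), 0 => - EL m 0
  | (m+2), (k+1) => EL (m+1) k - EL m (k+1)

lemma EL_rec (m k : ℕ) : EL (m+2) (k+1) = EL (m+1) k - EL m (k+1) := rfl

lemma EL_zero (m : ℕ) : ∀ k, m < k → EL m k = 0 := by
  induction m using Nat.strong_induction_on with
  | _ m ih =>
    intro k h
    match m, k with
    | 0, k+1 => rfl
    | 1, k+2 => rfl
    | m+2, k+1 =>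
      rw [EL_rec, ih (m+1) (by omega) k (by omega), ih m (by omega) (k+1) (by omega)]
      ring

lemma EL_ident (m : ℕ) : ∀ x y : ℂ, x^(2*m+1) + y^(2*m+1) =
    (x+y) * ∑ k ∈ Finset.range (m+1), (EL m k : ℂ) * (x*y)^(m-k) * (x^2+y^2)^k := by
  induction m using Nat.strong_induction_on with
  | _ m ih =>
    match m with
    | 0 => intro x y; simp [EL]
    | 1 =>
      intro x y
      rw [Finset.sum_range_succ, Finset.sum_range_one]
      show x^(2*1+1) + y^(2*1+1) = (x+y) * (((-1 : ℤ) : ℂ) * (x*y)^(1-0) * (x^2+y^2)^0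
          + ((1:ℤ) : ℂ) * (x*y)^(1-1) * (x^2+y^2)^1)
      push_cast
      ring
    | m+2 =>
      intro x y
      have h1 := ih (m+1) (by omega) x y
      have h0 := ih m (by omega) x y
      have key : ∑ k ∈ Finset.range (m+2+1), (EL (m+2) k : ℂ) * (x*y)^(m+2-k) * (x^2+y^2)^k
          = (x^2+y^2) * ∑ k ∈ Finset.range (m+1+1), (EL (m+1) k : ℂ) * (x*y)^(m+1-k) * (x^2+y^2)^k
            - (x*y)^2 * ∑ k ∈ Finset.range (m+1), (EL m k : ℂ) * (x*y)^(m-k) * (x^2+y^2)^k := by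
        rw [Finset.sum_range_succ' _ (m+2)]
        have e1 : ∀ k ∈ Finset.range (m+2),
            (EL (m+2) (k+1) : ℂ) * (x*y)^(m+2-(k+1)) * (x^2+y^2)^(k+1)
            = (EL (m+1) k : ℂ) * (x*y)^(m+1-k) * (x^2+y^2)^(k+1)
              - (EL m (k+1) : ℂ) * (x*y)^(m+1-k) * (x^2+y^2)^(k+1) := by
          intro k hk
          rw [EL_rec, show m+2-(k+1) = m+1-k by omega]
          push_cast
          ring
        rw [Finset.sum_congr rfl e1, Finset.sum_sub_distrib]
        have e2 : (x^2+y^2) * ∑ k ∈ Finset.range (m+1+1), (EL (m+1) k : ℂ) * (x*y)^(m+1-k) * (x^2+y^2)^k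
            = ∑ k ∈ Finset.range (m+2), (EL (m+1) k : ℂ) * (x*y)^(m+1-k) * (x^2+y^2)^(k+1) := by
          rw [Finset.mul_sum]
          exact Finset.sum_congr (by norm_num) fun k hk => by ring
        have step1 : ∑ k ∈ Finset.range (m+3), (EL m k : ℂ) * (x*y)^(m+2-k) * (x^2+y^2)^k
            = (x*y)^2 * ∑ k ∈ Finset.range (m+1), (EL m k : ℂ) * (x*y)^(m-k) * (x^2+y^2)^k := by
          rw [Finset.sum_range_succ, Finset.sum_range_succ, EL_zero m (m+1) (by omega),
            EL_zero m (m+2) (by omega), Finset.mul_sum]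
          push_cast
          simp only [zero_mul, add_zero]
          refine Finset.sum_congr rfl fun k hk => ?_
          simp only [Finset.mem_range] at hk
          rw [show m+2-k = (m-k)+2 by omega]
          ring
        have e3 : (x*y)^2 * ∑ k ∈ Finset.range (m+1), (EL m k : ℂ) * (x*y)^(m-k) * (x^2+y^2)^k
            = ∑ k ∈ Finset.range (m+2), (EL m (k+1) : ℂ) * (x*y)^(m+1-k) * (x^2+y^2)^(k+1)
              + (EL m 0 : ℂ) * (x*y)^(m+2-0) * (x^2+y^2)^0 := by
          rw [← step1, Finset.sum_range_succ' _ (m+2)]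
          refine congrArg (· + _) (Finset.sum_congr rfl fun k hk => ?_)
          rw [show m+2-(k+1) = m+1-k by omega]
        rw [e2, e3, show EL (m+2) 0 = - EL m 0 from rfl]
        push_cast
        ring
      calc x^(2*(m+2)+1) + y^(2*(m+2)+1)
          = (x^2+y^2)*(x^(2*(m+1)+1)+y^(2*(m+1)+1)) - (x*y)^2*(x^(2*m+1)+y^(2*m+1)) := by ring
        _ = (x+y) * ((x^2+y^2) * ∑ k ∈ Finset.range (m+1+1), (EL (m+1) k : ℂ) * (x*y)^(m+1-k) * (x^2+y^2)^k
            - (x*y)^2 * ∑ k ∈ Finset.range (m+1), (EL m k : ℂ) * (x*y)^(m-k) * (x^2+y^2)^k) := by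
            rw [h1, h0]; ring
        _ = _ := by rw [← key]

def EF (m k : ℕ) : ℤ :=
  if (m - k) % 2 = 0 then (-1)^((m-k)/2) * ((m+k)/2).choose ((m-k)/2)
  else (-1)^((m-k+1)/2) * ((m+k-1)/2).choose ((m-k-1)/2)

lemma EF_even (m k b : ℕ) (h : m = k + 2*b) : EF m k = (-1)^b * ((k+b).choose b) := by
  simp only [EF]
  rw [if_pos (by omega), show (m-k)/2 = b by omega, show (m+k)/2 = k+b by omega]

lemma EF_odd (m k b : ℕ) (h : m = k + 2*b + 1) : EF m k = (-1)^(b+1) * ((k+b).choose b) := by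
  simp only [EF]
  rw [if_neg (by omega), show (m-k+1)/2 = b+1 by omega, show (m+k-1)/2 = k+b by omega,
    show (m-k-1)/2 = b by omega]

lemma EL_eq_EF : ∀ m k, k ≤ m → EL m k = EF m k := by
  intro m
  induction m using Nat.strong_induction_on with
  | _ m ih =>
    intro k hk
    match m, k with
    | 0, 0 => rw [show EL 0 0 = 1 from rfl, EF_even 0 0 0 (by omega)]; simp
    | 1, 0 => rw [show EL 1 0 = -1 from rfl, EF_odd 1 0 0 (by omega)]; simp
    | 1, 1 => rw [show EL 1 1 = 1 from rfl, EF_even 1 1 0 (by omega)]; simp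
    | m+2, 0 =>
      rw [show EL (m+2) 0 = - EL m 0 from rfl, ih m (by omega) 0 (by omega)]
      rcases Nat.even_or_odd m with ⟨b, hb⟩ | ⟨b, hb⟩
      · rw [EF_even m 0 b (by omega), EF_even (m+2) 0 (b+1) (by omega)]
        simp [pow_succ]
      · rw [EF_odd m 0 b (by omega), EF_odd (m+2) 0 (b+1) (by omega)]
        simp [pow_succ]
    | m+2, k+1 =>
      rw [EL_rec]
      rcases Nat.lt_or_ge m (k+1) with h | h
      · -- k+1 = m+1 or m+2
        rw [EL_zero m (k+1) h, ih (m+1) (by omega) k (by omega), sub_zero]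
        rcases Nat.eq_or_lt_of_le hk with he | hl
        · -- k+1 = m+2
          rw [EF_even (m+1) k 0 (by omega), EF_even (m+2) (k+1) 0 (by omega)]
          simp
        · -- k+1 = m+1
          have hkm : k = m := by omega
          subst hkm
          rw [EF_odd (k+1) k 0 (by omega), EF_odd (k+2) (k+1) 0 (by omega)]
          simp
      · rw [ih (m+1) (by omega) k (by omega), ih m (by omega) (k+1) h]
        rcases Nat.even_or_odd (m - (k+1)) with ⟨b, hb⟩ | ⟨b, hb⟩
        · rw [EF_even m (k+1) b (by omega), EF_even (m+1) k (b+1) (by omega),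
            EF_even (m+2) (k+1) (b+1) (by omega)]
          rw [show k+1+(b+1) = (k+1+b)+1 by omega, Nat.choose_succ_succ' (k+1+b) b]
          push_cast [show k+(b+1) = k+1+b by omega]
          ring
        · rw [EF_odd m (k+1) b (by omega), EF_odd (m+1) k (b+1) (by omega),
            EF_odd (m+2) (k+1) (b+1) (by omega)]
          rw [show k+1+(b+1) = (k+1+b)+1 by omega, Nat.choose_succ_succ' (k+1+b) b]
          push_cast [show k+(b+1) = k+1+b by omega]
          ring

lemma negpow {R : Type*} [Monoid R] [HasDistribNeg R] (a b : ℕ) (h : a % 2 = b % 2) :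
    ((-1:R))^a = (-1)^b := by
  rcases Nat.even_or_odd a with ha | ha
  · have hb : Even b := Nat.even_iff.2 (by rw [← h]; exact Nat.even_iff.1 ha)
    rw [ha.neg_one_pow, hb.neg_one_pow]
  · have hb : Odd b := Nat.odd_iff.2 (by rw [← h]; exact Nat.odd_iff.1 ha)
    rw [ha.neg_one_pow, hb.neg_one_pow]

lemma prodQ (t : ℕ) : ∀ L, L < t →
    (∏ l ∈ Finset.Icc 1 L, ((t:ℚ)^2 - (l:ℚ)^2)) * (t.factorial : ℚ) * ((t-1-L).factorial : ℚ)
      = ((t+L).factorial : ℚ) * ((t-1).factorial : ℚ) := by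
  intro L
  induction L with
  | zero =>
    intro h
    simp
  | succ L ih =>
    intro h
    have ihh := ih (by omega)
    rw [Finset.prod_Icc_succ_top (by omega : 1 ≤ L+1)]
    have h1 : ((t:ℚ)^2 - ((L+1:ℕ):ℚ)^2) = ((t-(L+1):ℕ):ℚ) * ((t+(L+1):ℕ):ℚ) := by
      push_cast [Nat.cast_sub (by omega : L+1 ≤ t)]
      ring
    have e1 : ((t-1-L).factorial : ℚ) = ((t-1-(L+1)).factorial : ℚ) * ((t - (L+1) : ℕ) : ℚ) := by
      rw [show t-1-L = (t-1-(L+1))+1 by omega, Nat.factorial_succ,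
        show (t-1-(L+1))+1 = t-(L+1) by omega]
      push_cast; ring
    have e2 : ((t+(L+1)).factorial : ℚ) = ((t+(L+1):ℕ):ℚ) * ((t+L).factorial : ℚ) := by
      rw [show t+(L+1) = (t+L)+1 by omega, Nat.factorial_succ]
      push_cast; ring
    rw [h1, e2]
    rw [e1] at ihh
    push_cast at ihh ⊢
    linear_combination ((t:ℚ)+(L+1)) * ihh


lemma c_eq_EF (m t k : ℕ) (ht : m + 1 = 2*t) (ht2 : t % 2 = 0) (hk1 : 1 ≤ k) (hkm : k ≤ m) :
    (-1:ℚ)^(k/2 + k%2) * (4*(t:ℚ)) * ((4*(t:ℚ) - 2*(k:ℚ))^((k-1)%2)) *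
      (∏ l ∈ Finset.Icc 1 ((k-1)/2), (16*((t:ℚ)^2 - (l:ℚ)^2))) / (4^k * (k.factorial : ℚ))
      = (EF m k : ℚ) := by
  have hfac : ∀ a : ℕ, ((a.factorial : ℚ)) ≠ 0 :=
    fun a => Nat.cast_ne_zero.mpr (Nat.factorial_ne_zero a)
  have hprod : ∀ L : ℕ, (∏ l ∈ Finset.Icc 1 L, (16*((t:ℚ)^2 - (l:ℚ)^2)))
      = 16^L * ∏ l ∈ Finset.Icc 1 L, ((t:ℚ)^2 - (l:ℚ)^2) := by
    intro L
    rw [Finset.prod_mul_distrib, Finset.prod_const, Nat.card_Icc]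
    norm_num
  have htt : (t.factorial : ℚ) = (t:ℚ) * ((t-1).factorial : ℚ) := by
    rw [show t = (t-1)+1 by omega, Nat.factorial_succ, show t-1+1 = t by omega]
    push_cast
    ring
  rcases Nat.even_or_odd k with ⟨j, hj⟩ | ⟨L, hL⟩
  · -- k even, k = 2j
    have hj' : k = 2*j := by omega
    have hjt : j + 1 ≤ t := by omega
    have hiL : (k-1)/2 = j-1 := by omega
    rw [hiL, hprod (j-1)]
    set P : ℚ := ∏ l ∈ Finset.Icc 1 (j-1), ((t:ℚ)^2 - (l:ℚ)^2) with hPdef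
    have hP := prodQ t (j-1) (by omega)
    rw [show t+(j-1) = t+j-1 by omega, show t-1-(j-1) = t-j by omega, ← hPdef] at hP
    have hc1 : (t+j-1).choose (t-j-1) = (t+j-1).choose k := by
      rw [show t-j-1 = (t+j-1)-k by omega]
      exact Nat.choose_symm (by omega)
    have hEF : (EF m k : ℚ) = (-1:ℚ)^(t-j) * (((t+j-1).choose k : ℕ) : ℚ) := by
      rw [EF_odd m k (t-j-1) (by omega), show k+(t-j-1) = t+j-1 by omega, hc1]
      push_cast
      rw [negpow (t-j-1+1) (t-j) (by omega)]
    rw [hEF, Nat.cast_choose ℚ (show k ≤ t+j-1 by omega), show t+j-1-k = t-j-1 by omega,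
      show (k-1)%2 = 1 by omega, pow_one, negpow (k/2 + k%2) (t-j) (by omega)]
    have hmid : (4*(t:ℚ) - 2*(k:ℚ)) = 4 * ((t-j : ℕ) : ℚ) := by
      rw [Nat.cast_sub (by omega : j ≤ t), hj']
      push_cast
      ring
    have h4 : (4:ℚ)^k = 16 * 16^(j-1) := by
      rw [show k = 2*((j-1)+1) by omega, pow_mul, pow_succ]
      norm_num
      ring
    rw [hmid, h4]
    have htj : ((t-j:ℕ):ℚ) * (((t-j-1).factorial : ℕ) : ℚ) = (((t-j).factorial : ℕ) : ℚ) := by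
      rw [show t-j = (t-j-1)+1 by omega, Nat.factorial_succ, show t-j-1+1 = t-j by omega]
      push_cast
      ring
    have keyM : (t:ℚ) * ((t-j:ℕ):ℚ) * P * ((t-j-1).factorial : ℚ) = ((t+j-1).factorial : ℚ) := by
      apply mul_right_cancel₀ (hfac (t-1))
      linear_combination hP - P * ((t-j).factorial : ℚ) * htt + P * (t:ℚ) * ((t-1).factorial:ℚ) * htj
    rw [← mul_div_assoc, div_eq_div_iff (by positivity) (by positivity)]
    linear_combination 16 * 16^(j-1) * (k.factorial:ℚ) * (-1:ℚ)^(t-j) * keyM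
  · -- k odd, k = 2L+1
    have hL' : k = 2*L+1 := by omega
    have hLt : L + 1 ≤ t := by omega
    have hiL : (k-1)/2 = L := by omega
    rw [hiL, hprod L]
    set P : ℚ := ∏ l ∈ Finset.Icc 1 L, ((t:ℚ)^2 - (l:ℚ)^2) with hPdef
    have hP := prodQ t L (by omega)
    rw [← hPdef] at hP
    have hc1 : (t+L).choose (t-L-1) = (t+L).choose k := by
      rw [show t-L-1 = (t+L)-k by omega]
      exact Nat.choose_symm (by omega)
    have hEF : (EF m k : ℚ) = (-1:ℚ)^(t-L-1) * (((t+L).choose k : ℕ) : ℚ) := by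
      rw [EF_even m k (t-L-1) (by omega), show k+(t-L-1) = t+L by omega, hc1]
      push_cast
      ring
    rw [hEF, Nat.cast_choose ℚ (show k ≤ t+L by omega), show t+L-k = t-1-L by omega,
      show (k-1)%2 = 0 by omega, pow_zero, negpow (k/2 + k%2) (t-L-1) (by omega)]
    have h4 : (4:ℚ)^k = 4 * 16^L := by
      rw [hL', pow_succ, pow_mul]
      norm_num [mul_comm]
    rw [h4]
    have keyM : (t:ℚ) * P * ((t-1-L).factorial : ℚ) = ((t+L).factorial : ℚ) := by
      apply mul_right_cancel₀ (hfac (t-1))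
      linear_combination hP - P * ((t-1-L).factorial : ℚ) * htt
    rw [← mul_div_assoc, div_eq_div_iff (by positivity) (by positivity)]
    linear_combination 4 * 16^L * (k.factorial:ℚ) * (-1:ℚ)^(t-L-1) * keyM


/-- The case `n ≡ 7 (mod 8)` of the Eight Levels Theorem. -/
theorem eight_levels_mod8_seven (n : ℕ) (hn : n % 8 = 7) (c : ℕ → ℚ)
    (hc0 : c 0 = 1)
    (hc : ∀ k, 1 ≤ k → k ≤ n / 2 →
      c k = (-1 : ℚ) ^ (k / 2 + k % 2) * ((n : ℚ) + 1) *
        ((n : ℚ) + 1 - 2 * (k : ℚ)) ^ ((k - 1) % 2) *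
        (∏ l ∈ Finset.Icc 1 ((k - 1) / 2), (((n : ℚ) + 1) ^ 2 - (4 * (l : ℚ)) ^ 2)) /
        (4 ^ k * (Nat.factorial k : ℚ))) :
    (∀ k ≤ n / 2, ∃ z : ℤ, c k = (z : ℚ)) ∧
    ∀ x y : ℂ, x ^ n + y ^ n =
      (x + y) * ∑ k ∈ Finset.range (n / 2 + 1),
        (c k : ℂ) * (x * y) ^ (n / 2 - k) * (x ^ 2 + y ^ 2) ^ k := by
  set m := n / 2 with hmdef
  set t := (m+1)/2 with htdef
  have hm : n = 2*m+1 := by omega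
  have hmt : m + 1 = 2*t := by omega
  have ht2 : t % 2 = 0 := by omega
  have h1 : ((n:ℚ)+1) = 4*(t:ℚ) := by
    have h : n + 1 = 4*t := by omega
    calc ((n:ℚ)+1) = ((n+1 : ℕ) : ℚ) := by push_cast; ring
      _ = ((4*t : ℕ) : ℚ) := by rw [h]
      _ = 4*(t:ℚ) := by push_cast; ring
  have hck : ∀ k ≤ m, c k = ((EF m k : ℤ) : ℚ) := by
    intro k hk
    rcases Nat.eq_zero_or_pos k with rfl | hk1
    · have hEF0 : EF m 0 = 1 := by
        rw [EF_odd m 0 ((m-1)/2) (by omega), Nat.zero_add, Nat.choose_self,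
          (Nat.even_iff.2 (by omega) : Even ((m-1)/2+1)).neg_one_pow]
        ring
      rw [hc0, hEF0]
      norm_num
    · rw [hc k hk1 hk, h1]
      have hpc : ∏ l ∈ Finset.Icc 1 ((k-1)/2), ((4*(t:ℚ))^2 - (4*(l:ℚ))^2)
          = ∏ l ∈ Finset.Icc 1 ((k-1)/2), (16*((t:ℚ)^2 - (l:ℚ)^2)) :=
        Finset.prod_congr rfl (fun l _ => by ring)
      rw [hpc, c_eq_EF m t k hmt ht2 hk1 hk]
  constructor
  · intro k hk
    exact ⟨EF m k, hck k hk⟩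
  · intro x y
    have hid := EL_ident m x y
    rw [show 2*m+1 = n by omega] at hid
    rw [hid]
    congr 1
    refine Finset.sum_congr rfl fun k hk => ?_
    have hk' : k ≤ m := by
      have := Finset.mem_range.1 hk
      omega
    rw [hck k hk', EL_eq_EF m k hk']
    norm_cast
end

section
/- For every natural number n there exists a unique family of rational numbers Ψ_k(n), 0 ≤ k ≤ ⌊n/2⌋, such that for all complex numbers x, y: x^n + y^n = (x + y)^(δ(n)) · ∑_{k=0}^{⌊n/2⌋} Ψ_k(n) · (x·y)^(⌊n/2⌋ − k) · (x² + y²)^k; moreover, every Ψ_k(n) in this family is an integer. -/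
/-!
Writing `p = x y` and `s = x² + y²`, the power sums `x^n + y^n` satisfy
`x^(n+4) + y^(n+4) = s (x^(n+2) + y^(n+2)) - p² (x^n + y^n)`, a recurrence that preserves the
parity of `n`. Starting from `n = 0, 1, 2, 3` it produces integer coefficients `psi n k`.
Uniqueness: every `t ≠ -2` is `x² + y²` for some `x, y` with `x y = 1`, and then
`(x + y)² = t + 2 ≠ 0` can be cancelled, so two coefficient families give one-variable
polynomials agreeing at infinitely many points.
-/

open Finset Polynomial

def homogSum {R : Type*} [CommSemiring R] (m : ℕ) (c : ℕ → R) (p s : R) : R :=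
  ∑ k ∈ range (m + 1), c k * p ^ (m - k) * s ^ k

section homogSum

variable {R : Type*} [CommRing R] (m : ℕ) (p s : R)

theorem homogSum_succ (c : ℕ → R) :
    homogSum (m + 1) c p s = c 0 * p ^ (m + 1) + s * homogSum m (fun k => c (k + 1)) p s := by
  simp only [homogSum, sum_range_succ' _ (m + 1), Nat.add_sub_add_right, mul_sum]
  rw [Nat.sub_zero, pow_zero, mul_one, add_comm]
  congr 1
  exact sum_congr rfl fun k _ => by ring

theorem homogSum_sub (c d : ℕ → R) :
    homogSum m (fun k => c k - d k) p s = homogSum m c p s - homogSum m d p s := by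
  simp only [homogSum, ← sum_sub_distrib, sub_mul]

theorem homogSum_add_of_eq_zero {c : ℕ → R} (hc : ∀ k, m < k → c k = 0) (j : ℕ) :
    homogSum (m + j) c p s = p ^ j * homogSum m c p s := by
  rw [homogSum, homogSum, mul_sum,
    ← sum_subset (range_subset_range.mpr (by omega : m + 1 ≤ m + j + 1))]
  · refine sum_congr rfl fun k hk => ?_
    rw [show m + j - k = m - k + j by grind, pow_add]
    ring
  · intro k _ hk
    rw [hc k (by grind), zero_mul, zero_mul]

end homogSum

def psi : ℕ → ℕ → ℤ
  | 0, k => if k = 0 then 2 else 0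
  | 1, k => if k = 0 then 1 else 0
  | 2, k => if k = 1 then 1 else 0
  | 3, k => if k = 0 then -1 else if k = 1 then 1 else 0
  | n + 4, 0 => -psi n 0
  | n + 4, k + 1 => psi (n + 2) k - psi n (k + 1)

theorem psi_eq_zero_of_lt : ∀ n k, n / 2 < k → psi n k = 0
  | 0, k, hk | 1, k, hk | 2, k, hk | 3, k, hk => by
    simp only [psi]; split_ifs <;> omega
  | n + 4, 0, hk => by omega
  | n + 4, k + 1, hk => by
    rw [psi, psi_eq_zero_of_lt (n + 2) k (by omega), psi_eq_zero_of_lt n (k + 1) (by omega),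
      sub_zero]

theorem homogSum_psi_add_four {R : Type*} [CommRing R] (n : ℕ) (p s : R) :
    homogSum (n / 2 + 2) (fun k => (psi (n + 4) k : R)) p s =
      s * homogSum (n / 2 + 1) (fun k => (psi (n + 2) k : R)) p s -
        p ^ 2 * homogSum (n / 2) (fun k => (psi n k : R)) p s := by
  have hvanish : ∀ k, n / 2 < k → (psi n k : R) = 0 := fun k hk => by
    rw [psi_eq_zero_of_lt n k hk, Int.cast_zero]
  rw [← homogSum_add_of_eq_zero (n / 2) p s hvanish 2,
    homogSum_succ (n / 2 + 1) p s (fun k => (psi (n + 4) k : R)),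
    homogSum_succ (n / 2 + 1) p s (fun k => (psi n k : R))]
  simp only [psi, Int.cast_neg, Int.cast_sub, homogSum_sub]
  ring

theorem pow_add_pow_eq_psi {R : Type*} [CommRing R] : ∀ (n : ℕ) (x y : R),
    x ^ n + y ^ n =
      (x + y) ^ (n % 2) * homogSum (n / 2) (fun k => (psi n k : R)) (x * y) (x ^ 2 + y ^ 2)
  | 0, x, y | 1, x, y => by norm_num [homogSum, psi]
  | 2, x, y | 3, x, y => by norm_num [homogSum, sum_range_succ, psi] <;> ring
  | n + 4, x, y => by
    have hrec : x ^ (n + 4) + y ^ (n + 4) =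
        (x ^ 2 + y ^ 2) * (x ^ (n + 2) + y ^ (n + 2)) - (x * y) ^ 2 * (x ^ n + y ^ n) := by
      ring
    rw [hrec, pow_add_pow_eq_psi (n + 2), pow_add_pow_eq_psi n,
      show (n + 4) / 2 = n / 2 + 2 by omega, show (n + 2) / 2 = n / 2 + 1 by omega,
      show (n + 4) % 2 = n % 2 by omega, show (n + 2) % 2 = n % 2 by omega,
      homogSum_psi_add_four]
    ring

theorem exists_mul_eq_one_and_sq_add_sq_eq (t : ℂ) :
    ∃ x y : ℂ, x * y = 1 ∧ x ^ 2 + y ^ 2 = t := by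
  obtain ⟨a, ha⟩ := IsAlgClosed.exists_pow_nat_eq (t + 2) two_pos
  obtain ⟨b, hb⟩ := IsAlgClosed.exists_pow_nat_eq (t - 2) two_pos
  exact ⟨(a + b) / 2, (a - b) / 2, by linear_combination (ha - hb) / 4,
    by linear_combination (ha + hb) / 2⟩

theorem homogSum_one_left {R : Type*} [CommSemiring R] (m : ℕ) (c : ℕ → R) (t : R) :
    homogSum m c 1 t = (∑ k ∈ range (m + 1), monomial k (c k)).eval t := by
  simp [homogSum, eval_finsetSum]

theorem coeff_sum_monomial {R : Type*} [Semiring R] {m k : ℕ} (c : ℕ → R) (hk : k ≤ m) :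
    (∑ i ∈ range (m + 1), monomial i (c i)).coeff k = c k := by
  simp [coeff_monomial, Nat.lt_succ_of_le hk]

theorem eq_of_forall_homogSum_eq {m e : ℕ} {c d : ℕ → ℂ}
    (h : ∀ x y : ℂ, (x + y) ^ e * homogSum m c (x * y) (x ^ 2 + y ^ 2) =
      (x + y) ^ e * homogSum m d (x * y) (x ^ 2 + y ^ 2)) :
    ∀ k ≤ m, c k = d k := by
  have heval : {-2}ᶜ ⊆ {t : ℂ | (∑ k ∈ range (m + 1), monomial k (c k)).eval t =
      (∑ k ∈ range (m + 1), monomial k (d k)).eval t} := by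
    intro t ht
    obtain ⟨x, y, hxy, hsq⟩ := exists_mul_eq_one_and_sq_add_sq_eq t
    have hsum : x + y ≠ 0 := fun h0 =>
      ht (Set.mem_singleton_iff.mpr (by linear_combination (x + y) * h0 - hsq - 2 * hxy))
    have := mul_left_cancel₀ (pow_ne_zero e hsum) (h x y)
    rwa [hxy, hsq, homogSum_one_left, homogSum_one_left] at this
  have hpoly := eq_of_infinite_eval_eq _ _ ((Set.finite_singleton _).infinite_compl.mono heval)
  intro k hk
  rw [← coeff_sum_monomial c hk, hpoly, coeff_sum_monomial d hk]

/-- Existence, uniqueness and integrality of the Ψ-coefficients of `x^n + y^n`. -/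
theorem psi_exists_unique_int (n : ℕ) :
    (∃! c : ℕ → ℚ,
      (∀ k, n / 2 < k → c k = 0) ∧
      ∀ x y : ℂ, x ^ n + y ^ n =
        (x + y) ^ (n % 2) * ∑ k ∈ Finset.range (n / 2 + 1),
          (c k : ℂ) * (x * y) ^ (n / 2 - k) * (x ^ 2 + y ^ 2) ^ k) ∧
    (∀ c : ℕ → ℚ,
      ((∀ k, n / 2 < k → c k = 0) ∧
      ∀ x y : ℂ, x ^ n + y ^ n =
        (x + y) ^ (n % 2) * ∑ k ∈ Finset.range (n / 2 + 1),
          (c k : ℂ) * (x * y) ^ (n / 2 - k) * (x ^ 2 + y ^ 2) ^ k) →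
      ∀ k ≤ n / 2, ∃ z : ℤ, c k = (z : ℚ)) := by
  have hpsi : ∀ x y : ℂ, x ^ n + y ^ n =
      (x + y) ^ (n % 2) *
        homogSum (n / 2) (fun k => ((psi n k : ℚ) : ℂ)) (x * y) (x ^ 2 + y ^ 2) :=
    fun x y => by simpa only [Rat.cast_intCast] using pow_add_pow_eq_psi n x y
  have huniq : ∀ c : ℕ → ℚ, (∀ x y : ℂ, x ^ n + y ^ n =
      (x + y) ^ (n % 2) * homogSum (n / 2) (fun k => (c k : ℂ)) (x * y) (x ^ 2 + y ^ 2)) →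
      ∀ k ≤ n / 2, c k = psi n k := fun c hc k hk => by
    exact_mod_cast eq_of_forall_homogSum_eq (fun x y => (hc x y).symm.trans (hpsi x y)) k hk
  refine ⟨⟨fun k => psi n k, ⟨fun k hk => ?_, hpsi⟩, fun c hc => funext fun k => ?_⟩,
    fun c hc k hk => ⟨psi n k, huniq c hc.2 k hk⟩⟩
  · simp [psi_eq_zero_of_lt n k hk]
  · by_cases hk : k ≤ n / 2
    · exact huniq c hc.2 k hk
    · simp [hc.1 k (by omega), psi_eq_zero_of_lt n k (by omega)]
end

section
/- Let n ≥ 2 be a natural number. Suppose (a_k), (b_k), (c_k) are families of rational numbers, indexed over all integers k with a_k = 0 unless 0 ≤ k ≤ ⌊(n+2)/2⌋, b_k = 0 unless 0 ≤ k ≤ ⌊n/2⌋, c_k = 0 unless 0 ≤ k ≤ ⌊(n−2)/2⌋, such that for all complex x, y: x^(n+2) + y^(n+2) = (x+y)^(δ(n)) · ∑_k a_k (xy)^(⌊(n+2)/2⌋−k)(x²+y²)^k, x^n + y^n = (x+y)^(δ(n)) · ∑_k b_k (xy)^(⌊n/2⌋−k)(x²+y²)^k, and x^(n−2) + y^(n−2)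 = (x+y)^(δ(n)) · ∑_k c_k (xy)^(⌊(n−2)/2⌋−k)(x²+y²)^k. Then for every integer k ≥ 1: a_k = b_{k−1} − c_k. -/
open Finset Polynomial

/-- auxiliary: the key algebraic identity -/
lemma psi_key_identity (n : ℕ) (hn : 2 ≤ n) (x y : ℂ) :
    x ^ (n + 2) + y ^ (n + 2) =
      (x ^ 2 + y ^ 2) * (x ^ n + y ^ n) - (x * y) ^ 2 * (x ^ (n - 2) + y ^ (n - 2)) := by
  obtain ⟨k, rfl⟩ : ∃ k, n = k + 2 := ⟨n - 2, by omega⟩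
  have h : k + 2 - 2 = k := by omega
  rw [h]
  ring

/-- The recurrence `Ψ_k(n+2) = Ψ_{k-1}(n) - Ψ_k(n-2)` for the Ψ-coefficients. -/
theorem psi_recurrence (n : ℕ) (hn : 2 ≤ n) (a b c : ℤ → ℚ)
    (ha0 : ∀ k : ℤ, (k < 0 ∨ (((n + 2) / 2 : ℕ) : ℤ) < k) → a k = 0)
    (hb0 : ∀ k : ℤ, (k < 0 ∨ ((n / 2 : ℕ) : ℤ) < k) → b k = 0)
    (hc0 : ∀ k : ℤ, (k < 0 ∨ (((n - 2) / 2 : ℕ) : ℤ) < k) → c k = 0)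
    (ha : ∀ x y : ℂ, x ^ (n + 2) + y ^ (n + 2) =
      (x + y) ^ (n % 2) * ∑ k ∈ Finset.range ((n + 2) / 2 + 1),
        (a (k : ℤ) : ℂ) * (x * y) ^ ((n + 2) / 2 - k) * (x ^ 2 + y ^ 2) ^ k)
    (hb : ∀ x y : ℂ, x ^ n + y ^ n =
      (x + y) ^ (n % 2) * ∑ k ∈ Finset.range (n / 2 + 1),
        (b (k : ℤ) : ℂ) * (x * y) ^ (n / 2 - k) * (x ^ 2 + y ^ 2) ^ k)
    (hc : ∀ x y : ℂ, x ^ (n - 2) + y ^ (n - 2) =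
      (x + y) ^ (n % 2) * ∑ k ∈ Finset.range ((n - 2) / 2 + 1),
        (c (k : ℤ) : ℂ) * (x * y) ^ ((n - 2) / 2 - k) * (x ^ 2 + y ^ 2) ^ k) :
    ∀ k : ℤ, 1 ≤ k → a k = b (k - 1) - c k := by
  have hm1 : 1 ≤ n / 2 := by omega
  set m := n / 2 with hm
  have hA : (n + 2) / 2 = m + 1 := by omega
  have hC : (n - 2) / 2 + 1 = m := by omega
  set f := algebraMap ℚ ℂ with hf
  set d : ℤ → ℚ := fun k => a k - b (k - 1) + c k with hd
  set P : Polynomial ℚ := ∑ k ∈ Finset.range (m + 2), Polynomial.C (d k) * Polynomial.X ^ k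
    with hP
  -- evaluation of P at any v
  have heval : ∀ v : ℂ, (P.map f).eval v =
      (∑ k ∈ Finset.range (m + 2), (a (k : ℤ) : ℂ) * v ^ k)
      - v * (∑ k ∈ Finset.range (m + 1), (b (k : ℤ) : ℂ) * v ^ k)
      + (∑ k ∈ Finset.range m, (c (k : ℤ) : ℂ) * v ^ k) := by
    intro v
    have e1 : (P.map f).eval v
        = ∑ k ∈ Finset.range (m + 2), ((d (k : ℤ)) : ℂ) * v ^ k := by
      rw [hP, Polynomial.map_sum, Polynomial.eval_finset_sum]
      refine Finset.sum_congr rfl fun i _ => ?_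
      simp [hf]
    have e2 : ∑ k ∈ Finset.range (m + 2), ((b ((k : ℤ) - 1)) : ℂ) * v ^ k
        = v * ∑ k ∈ Finset.range (m + 1), (b (k : ℤ) : ℂ) * v ^ k := by
      rw [Finset.sum_range_succ']
      have hb1 : b (-1) = 0 := hb0 (-1) (Or.inl (by norm_num))
      rw [Finset.mul_sum]
      simp only [Nat.cast_zero, zero_sub, hb1, Rat.cast_zero, zero_mul, add_zero,
        Nat.cast_add, Nat.cast_one, add_sub_cancel_right]
      refine Finset.sum_congr rfl fun i _ => ?_
      ring
    have e3 : ∑ k ∈ Finset.range (m + 2), ((c (k : ℤ)) : ℂ) * v ^ k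
        = ∑ k ∈ Finset.range m, (c (k : ℤ) : ℂ) * v ^ k := by
      rw [Finset.sum_range_succ, Finset.sum_range_succ]
      have hcm : c m = 0 := hc0 m (Or.inr (by push_cast; omega))
      have hcm1 : c (m + 1) = 0 := hc0 (m + 1) (Or.inr (by push_cast; omega))
      push_cast
      rw [hcm, hcm1]
      push_cast
      ring
    rw [e1, ← e2, ← e3, hd]
    rw [← Finset.sum_sub_distrib, ← Finset.sum_add_distrib]
    refine Finset.sum_congr rfl fun i _ => ?_
    push_cast
    ring
  -- the evaluation vanishes for v = x^2 + (x⁻¹)^2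
  have key : ∀ x : ℂ, x ≠ 0 → x + x⁻¹ ≠ 0 →
      (P.map f).eval (x ^ 2 + (x⁻¹) ^ 2) = 0 := by
    intro x hx hxx
    set y := x⁻¹ with hy
    have hu : x * y = 1 := mul_inv_cancel₀ hx
    set v := x ^ 2 + y ^ 2 with hv
    have Ea := ha x y
    have Eb := hb x y
    have Ec := hc x y
    rw [hA] at Ea
    rw [hC] at Ec
    simp only [hu, one_pow, one_mul, mul_one] at Ea Eb Ec
    have K := psi_key_identity n hn x y
    rw [Ea, Eb, Ec, hu] at K
    have hpow : (x + y) ^ (n % 2) ≠ 0 := pow_ne_zero _ hxx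
    have K2 : (x + y) ^ (n % 2) *
        ((∑ k ∈ Finset.range (m + 2), (a (k : ℤ) : ℂ) * v ^ k)
        - v * (∑ k ∈ Finset.range (m + 1), (b (k : ℤ) : ℂ) * v ^ k)
        + (∑ k ∈ Finset.range m, (c (k : ℤ) : ℂ) * v ^ k)) = 0 := by
      rw [← sub_eq_zero] at K
      rw [← K]; ring
    have hz := (mul_eq_zero.mp K2).resolve_left hpow
    rw [heval]
    exact hz
  -- infinitely many roots, hence P = 0
  have gmono : StrictMono (fun t : ℕ => ((t : ℚ) + 1) ^ 2 + (((t : ℚ) + 1) ^ 2)⁻¹) := by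
    apply strictMono_nat_of_lt_succ
    intro t
    have h1 : (0 : ℚ) < ((t : ℚ) + 1) ^ 2 := by positivity
    have h2 : (1 : ℚ) ≤ ((t : ℚ) + 1) ^ 2 := by nlinarith [Nat.cast_nonneg (α := ℚ) t]
    have h3 : (((t : ℚ) + 1) ^ 2)⁻¹ ≤ 1 := inv_le_one_of_one_le₀ h2
    have h4 : (0 : ℚ) < ((((t : ℕ) + 1 : ℕ) : ℚ) + 1) ^ 2 := by positivity
    have h5 : (0 : ℚ) < (((((t : ℕ) + 1 : ℕ) : ℚ) + 1) ^ 2)⁻¹ := by positivity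
    push_cast
    push_cast at h5
    nlinarith [Nat.cast_nonneg (α := ℚ) t]
  have hroots : {v : ℂ | (P.map f).IsRoot v}.Infinite := by
    apply Set.infinite_of_injective_forall_mem
      (f := fun t : ℕ => ((((t : ℚ) + 1) ^ 2 + (((t : ℚ) + 1) ^ 2)⁻¹ : ℚ) : ℂ))
    · intro s t hst
      have := Rat.cast_injective (α := ℂ) hst
      exact gmono.injective this
    · intro t
      have hx0 : ((t : ℂ) + 1) ≠ 0 := by
        intro h
        have : ((t : ℝ) + 1) = 0 := by exact_mod_cast congrArg Complex.re h
        nlinarith [Nat.cast_nonneg (α := ℝ) t]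
      have hxx : ((t : ℂ) + 1) + ((t : ℂ) + 1)⁻¹ ≠ 0 := by
        have hq : ((t : ℚ) + 1) + ((t : ℚ) + 1)⁻¹ ≠ 0 := by positivity
        have : ((((t : ℚ) + 1) + ((t : ℚ) + 1)⁻¹ : ℚ) : ℂ)
            = ((t : ℂ) + 1) + ((t : ℂ) + 1)⁻¹ := by push_cast; ring
        rw [← this]
        exact_mod_cast hq
      have := key ((t : ℂ) + 1) hx0 hxx
      have hcast : ((((t : ℚ) + 1) ^ 2 + (((t : ℚ) + 1) ^ 2)⁻¹ : ℚ) : ℂ)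
          = ((t : ℂ) + 1) ^ 2 + (((t : ℂ) + 1)⁻¹) ^ 2 := by
        push_cast
        rw [inv_pow]
      simpa [Polynomial.IsRoot, hcast] using this
  have hPmap0 : P.map f = 0 := Polynomial.eq_zero_of_infinite_isRoot _ hroots
  have hP0 : P = 0 := by
    have hinj : Function.Injective f := (algebraMap ℚ ℂ).injective
    exact Polynomial.map_injective f hinj (by rw [hPmap0, Polynomial.map_zero])
  -- extract coefficients
  have hcoeff : ∀ j : ℕ, j < m + 2 → d j = 0 := by
    intro j hj
    have := congrArg (fun p => Polynomial.coeff p j) hP0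
    simp only [hP, Polynomial.finset_sum_coeff, Polynomial.coeff_C_mul,
      Polynomial.coeff_X_pow, Polynomial.coeff_zero, mul_ite, mul_one, mul_zero] at this
    rwa [Finset.sum_ite_eq (Finset.range (m + 2)) j (fun k => d (k : ℤ)),
      if_pos (Finset.mem_range.mpr hj)] at this
  intro k hk
  by_cases hkm : k ≤ (m : ℤ) + 1
  · lift k to ℕ using (by omega)
    have hj : (k : ℕ) < m + 2 := by exact_mod_cast (by omega : (k : ℤ) < (m : ℤ) + 2)
    have := hcoeff k hj
    rw [hd] at this
    simp only at this
    linarith [this]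
  · have h1 : a k = 0 := ha0 k (Or.inr (by rw [hA]; push_cast; omega))
    have h2 : b (k - 1) = 0 := hb0 (k - 1) (Or.inr (by omega))
    have h3 : c k = 0 := hc0 k (Or.inr (by rw [show (n-2)/2 = m - 1 from by omega]; omega))
    rw [h1, h2, h3]; ring
end

section
/- Let n be an odd natural number. Suppose (a_k)_{0 ≤ k ≤ ⌊n/2⌋} and (b_k)_{0 ≤ k ≤ (n+1)/2} are families of rational numbers such that for all complex x, y: x^n + y^n = (x+y) · ∑_{k=0}^{⌊n/2⌋} a_k (xy)^(⌊n/2⌋−k)(x²+y²)^k and x^(n+1) + y^(n+1) = ∑_{k=0}^{(n+1)/2} b_k (xy)^((n+1)/2−k)(x²+y²)^k. Then for every k with 0 ≤ k ≤ ⌊n/2⌋: (n+1) · a_k = 2·(k+1) · b_{k+1} + ((n+1)/2 − k) · b_k. -/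
/-!
Differentiate the expansion of `x ^ (n + 1) + y ^ (n + 1)` along the diagonal direction
`t ↦ (x + t, y + t)`: the left side gives `(n + 1) (x ^ n + y ^ n)`, while `xy` and `x² + y²`
have derivatives `x + y` and `2 (x + y)`. On the curve `xy = 1` the right side becomes `x + y`
times a polynomial in `s = x² + y²`, and so does the left side by the expansion of `x ^ n + y ^ n`.
Since `x + y ≠ 0` there unless `s = -2`, the two polynomials agree at infinitely many `s`, hence
coefficientwise.
-/

open Finset Polynomial

section Algebra

variable {R : Type*} [CommRing R]

def psiSum (c : ℕ → R) (N : ℕ) (p s : R) : R :=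
  ∑ k ∈ range (N + 1), c k * p ^ (N - k) * s ^ k

theorem sum_range_succ_psi_deriv (c : ℕ → R) (N : ℕ) (s : R) :
    ∑ k ∈ range (N + 1), c k * (((N - k : ℕ) : R) * s ^ k + 2 * ((k : R) * s ^ (k - 1))) =
      ∑ k ∈ range N, (2 * ((k : R) + 1) * c (k + 1) + ((N : R) - k) * c k) * s ^ k := by
  simp only [mul_add, sum_add_distrib]
  rw [sum_range_succ, sum_range_succ', add_add_add_comm, ← sum_add_distrib]
  simp only [Nat.sub_self, Nat.cast_zero, zero_mul, mul_zero, add_zero]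
  refine sum_congr rfl fun k hk => ?_
  rw [Nat.cast_sub (mem_range.mp hk).le, Nat.add_sub_cancel]
  push_cast
  ring

end Algebra

theorem exists_add_eq_mul_eq {K : Type*} [Field K] [IsAlgClosed K] (u P : K) :
    ∃ x y : K, x + y = u ∧ x * y = P := by
  obtain ⟨x, hx⟩ := IsAlgClosed.exists_root (C 1 * X ^ 2 + C (-u) * X + C P)
    (by rw [degree_quadratic one_ne_zero]; decide)
  refine ⟨x, u - x, by ring, ?_⟩
  simp only [IsRoot, eval_add, eval_mul, eval_C, eval_pow, eval_X] at hx
  linear_combination -hx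

theorem exists_mul_eq_one_sq_add_sq_eq {K : Type*} [Field K] [IsAlgClosed K] {v : K}
    (hv : v ≠ -2) : ∃ x y : K, x * y = 1 ∧ x ^ 2 + y ^ 2 = v ∧ x + y ≠ 0 := by
  obtain ⟨u, hu⟩ := IsAlgClosed.exists_pow_nat_eq (v + 2) two_pos
  obtain ⟨x, y, hsum, hxy⟩ := exists_add_eq_mul_eq u 1
  refine ⟨x, y, hxy, by linear_combination (x + y + u) * hsum - 2 * hxy + hu, ?_⟩
  rintro h0
  rw [← hsum, h0] at hu
  exact hv (by linear_combination -hu)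

theorem eq_zero_of_sum_pow_eq_zero_of_finite {K : Type*} [Field K] [Infinite K] {c : ℕ → K}
    {N : ℕ} {S : Set K} (hS : S.Finite) (h : ∀ v ∉ S, ∑ i ∈ range N, c i * v ^ i = 0) :
    ∀ i < N, c i = 0 := by
  intro i hi
  set q : K[X] := ∑ j ∈ range N, C (c j) * X ^ j
  have hq : q = 0 := by
    refine eq_zero_of_infinite_isRoot q (hS.infinite_compl.mono fun v hv => ?_)
    simpa [q, eval_finsetSum] using h v hv
  simpa [q, finsetSum_coeff, coeff_C_mul, coeff_X_pow, hi] using congrArg (coeff · i) hq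

section Deriv

variable {𝕜 : Type*} [NontriviallyNormedField 𝕜]

theorem hasDerivAt_psiSum (c : ℕ → 𝕜) (N : ℕ) {p s : 𝕜 → 𝕜} {p' s' t : 𝕜}
    (hp : HasDerivAt p p' t) (hs : HasDerivAt s s' t) :
    HasDerivAt (fun t => psiSum c N (p t) (s t))
      (∑ k ∈ range (N + 1), c k * (((N - k : ℕ) : 𝕜) * p t ^ (N - k - 1) * p' * s t ^ k
        + p t ^ (N - k) * ((k : 𝕜) * s t ^ (k - 1) * s'))) t :=
  HasDerivAt.fun_sum fun k _ =>
    (((hp.fun_pow (N - k)).const_mul (c k)).fun_mul (hs.fun_pow k)).congr_deriv (by ring)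

theorem hasDerivAt_psiSum_diagonal (c : ℕ → 𝕜) (N : ℕ) {x y : 𝕜} (hxy : x * y = 1) :
    HasDerivAt (fun t => psiSum c N ((x + t) * (y + t)) ((x + t) ^ 2 + (y + t) ^ 2))
      ((x + y) * ∑ k ∈ range N,
        (2 * ((k : 𝕜) + 1) * c (k + 1) + ((N : 𝕜) - k) * c k) * (x ^ 2 + y ^ 2) ^ k) 0 := by
  have hx := (hasDerivAt_id' (0 : 𝕜)).const_add x
  have hy := (hasDerivAt_id' (0 : 𝕜)).const_add y
  refine (hasDerivAt_psiSum c N (hx.fun_mul hy)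
    ((hx.fun_pow 2).fun_add (hy.fun_pow 2))).congr_deriv ?_
  simp only [add_zero, hxy, one_pow, one_mul, mul_one, ← sum_range_succ_psi_deriv, mul_sum]
  refine sum_congr rfl fun k _ => ?_
  push_cast
  ring

theorem succ_mul_add_pow_eq_of_psiSum {c : ℕ → 𝕜} {m N : ℕ}
    (hc : ∀ x y : 𝕜, x ^ (m + 1) + y ^ (m + 1) = psiSum c N (x * y) (x ^ 2 + y ^ 2))
    {x y : 𝕜} (hxy : x * y = 1) :
    ((m : 𝕜) + 1) * (x ^ m + y ^ m) = (x + y) * ∑ k ∈ range N,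
      (2 * ((k : 𝕜) + 1) * c (k + 1) + ((N : 𝕜) - k) * c k) * (x ^ 2 + y ^ 2) ^ k := by
  have hx := (hasDerivAt_id' (0 : 𝕜)).const_add x
  have hy := (hasDerivAt_id' (0 : 𝕜)).const_add y
  have hpow := (hx.fun_pow (m + 1)).fun_add (hy.fun_pow (m + 1))
  simp only [hc] at hpow
  refine Eq.trans ?_ (hpow.unique (hasDerivAt_psiSum_diagonal c N hxy))
  simp only [add_zero, Nat.add_sub_cancel, mul_one]
  push_cast
  ring

end Deriv

/-- The relation between the Ψ-coefficients of odd `n` and of `n + 1`. -/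
theorem psi_odd_relation (n : ℕ) (hn : Odd n) (a b : ℕ → ℚ)
    (ha : ∀ x y : ℂ, x ^ n + y ^ n =
      (x + y) * ∑ k ∈ Finset.range (n / 2 + 1),
        (a k : ℂ) * (x * y) ^ (n / 2 - k) * (x ^ 2 + y ^ 2) ^ k)
    (hb : ∀ x y : ℂ, x ^ (n + 1) + y ^ (n + 1) =
      ∑ k ∈ Finset.range ((n + 1) / 2 + 1),
        (b k : ℂ) * (x * y) ^ ((n + 1) / 2 - k) * (x ^ 2 + y ^ 2) ^ k) :
    ∀ k ≤ n / 2,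
      ((n : ℚ) + 1) * a k =
        2 * ((k : ℚ) + 1) * b (k + 1) + ((((n + 1) / 2 : ℕ) : ℚ) - (k : ℚ)) * b k := by
  have hM : (n + 1) / 2 = n / 2 + 1 := by
    obtain ⟨t, rfl⟩ := hn
    omega
  rw [hM] at hb ⊢
  set d : ℕ → ℚ := fun k =>
    (n + 1) * a k - (2 * (k + 1) * b (k + 1) + (((n / 2 + 1 : ℕ) : ℚ) - k) * b k) with hd
  have hvanish : ∀ v ∉ ({-2} : Set ℂ), ∑ k ∈ range (n / 2 + 1), (d k : ℂ) * v ^ k = 0 := by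
    intro v hv
    obtain ⟨x, y, hxy, hsq, hne⟩ :=
      exists_mul_eq_one_sq_add_sq_eq (Set.mem_singleton_iff.not.mp hv)
    have h := succ_mul_add_pow_eq_of_psiSum (c := fun k => (b k : ℂ)) hb hxy
    simp only [ha x y, hxy, hsq, one_pow, mul_one] at h
    have h' : ((n : ℂ) + 1) * ∑ k ∈ range (n / 2 + 1), (a k : ℂ) * v ^ k =
        ∑ k ∈ range (n / 2 + 1), (2 * ((k : ℂ) + 1) * b (k + 1) +
          (((n / 2 + 1 : ℕ) : ℂ) - k) * b k) * v ^ k :=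
      mul_left_cancel₀ hne (by linear_combination h)
    rw [mul_sum] at h'
    simp only [hd]
    push_cast at h' ⊢
    rw [← sub_eq_zero.mpr h', ← sum_sub_distrib]
    exact sum_congr rfl fun k _ => by ring
  intro k hk
  have hdk : d k = 0 := by
    exact_mod_cast eq_zero_of_sum_pow_eq_zero_of_finite (Set.finite_singleton _) hvanish k (by omega)
  exact sub_eq_zero.mp hdk
end

section
/- Let n ≥ 1 be a natural number and let (Ψ_k(n))_{0 ≤ k ≤ ⌊n/2⌋} be the unique family of rational numbers such that for all complex x, y: x^n + y^n = (x+y)^(δ(n)) · ∑_{k=0}^{⌊n/2⌋} Ψ_k(n) (xy)^(⌊n/2⌋−k)(x²+y²)^k. Then Ψ_{⌊n/2⌋}(n) = 1, and for every k with 2 ≤ k ≤ ⌊n/2⌋: 16·k·(k−1)·Ψ_k(n) = −( (n + (−1)^(⌊n/2⌋ + k)·δ(n))² − (2k − 2 − 2·δ(n−1))² ) · Ψ_{k−2}(n). -/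
/-!
Write `Q(u) = ∑ Ψ_k(n) u^k` and `n = 2m + δ(n)`. Taking `y = 1` and `w = x + x⁻¹`, the defining
identity reads `x^n + 1 = (x + 1)^δ(n) x^m Q(w)`. Since `x ↦ x + x⁻¹` maps `ℂ \ {0, 1}` onto
`ℂ \ {2}`, an identity between `Q(w), Q'(w), …` that holds for all `x ≠ 0, 1` is a polynomial
identity in `w`. Differentiating in `x`:

* for even `n`, `(x - x⁻¹) Q'(w) = m (x^m - x⁻ᵐ)`; squaring eliminates `x`, giving
  `m² (Q² - 4) = (w² - 4) Q'²`, and one more derivative gives the Chebyshev equation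
  `(w² - 4) Q'' + w Q' = m² Q`;
* for odd `n`, together with the identity at `y = -1`, the functional equation
  `Q(w) + (2w + 4) Q'(w) = (-1)^m n Q(-w)`, whose coefficientwise form, used twice, gives the
  recurrence.

Finally `y = 0` gives `Ψ_m(n) = 1`.
-/

open Polynomial Finset

theorem sum_mul_pow_sub_mul_pow_eq_eval {K : Type*} [Field K] (m : ℕ) (c : ℕ → K) {a : K}
    (ha : a ≠ 0) (b : K) :
    ∑ k ∈ range (m + 1), c k * a ^ (m - k) * b ^ k =
      a ^ m * (∑ k ∈ range (m + 1), C (c k) * X ^ k).eval (b / a) := by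
  simp only [eval_finsetSum, eval_mul, eval_C, eval_pow, eval_X, mul_sum]
  refine sum_congr rfl fun k hk => ?_
  rw [← Nat.sub_add_cancel (Nat.lt_succ_iff.mp (mem_range.mp hk)), pow_add, Nat.add_sub_cancel,
    div_pow]
  field_simp

theorem sum_mul_zero_pow_sub {R : Type*} [Semiring R] (m : ℕ) (f : ℕ → R) :
    ∑ k ∈ range (m + 1), f k * 0 ^ (m - k) = f m := by
  rw [sum_range_succ, Nat.sub_self, pow_zero, mul_one,
    sum_eq_zero fun k hk => by rw [zero_pow (by rw [mem_range] at hk; omega), mul_zero], zero_add]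

theorem coeff_X_mul_derivative {R : Type*} [Semiring R] (p : R[X]) (n : ℕ) :
    (X * derivative p).coeff n = n * p.coeff n := by
  cases n with
  | zero => simp
  | succ n => rw [coeff_X_mul, coeff_derivative, ← Nat.cast_succ, Nat.cast_comm]

theorem coeff_comp_neg_X {R : Type*} [CommRing R] (p : R[X]) (k : ℕ) :
    (p.comp (-X)).coeff k = (-1) ^ k * p.coeff k := by
  induction p using Polynomial.induction_on' with
  | add p q hp hq => rw [add_comp, coeff_add, coeff_add, hp, hq, mul_add]
  | monomial n a =>
    rw [← C_mul_X_pow_eq_monomial, mul_comp, C_comp, X_pow_comp, neg_pow, ← C_1, ← C_neg,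
      ← C_pow, ← mul_assoc, ← C_mul, coeff_C_mul_X_pow, coeff_C_mul_X_pow]
    split_ifs with h
    · subst h; ring
    · simp

section AddInv

variable {K : Type*} [Field K] [IsAlgClosed K]

theorem exists_add_inv_eq (u : K) : ∃ x : K, x ≠ 0 ∧ x + x⁻¹ = u := by
  obtain ⟨x, hx⟩ := IsAlgClosed.exists_root (X ^ 2 - C u * X + 1) (by
    rw [show (X ^ 2 - C u * X + 1 : K[X]).degree = 2 by compute_degree!]; decide)
  simp only [IsRoot, eval_add, eval_sub, eval_mul, eval_pow, eval_C, eval_X, eval_one] at hx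
  have hx0 : x ≠ 0 := by rintro rfl; simp at hx
  exact ⟨x, hx0, by field_simp; linear_combination hx⟩

theorem eq_zero_of_eval_add_inv_eq_zero (P : K[X])
    (h : ∀ x : K, x ≠ 0 → x ≠ 1 → P.eval (x + x⁻¹) = 0) : P = 0 := by
  refine P.eq_zero_of_infinite_isRoot ((Set.finite_singleton (2 : K)).infinite_compl.mono ?_)
  intro u hu
  obtain ⟨x, hx0, rfl⟩ := exists_add_inv_eq u
  refine h x hx0 ?_
  rintro rfl
  exact hu (by norm_num)

end AddInv

section Calculus

variable {𝕜 : Type*} [NontriviallyNormedField 𝕜] {x : 𝕜}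

theorem hasDerivAt_pow_of_ne_zero (n : ℕ) (hx : x ≠ 0) :
    HasDerivAt (fun t => t ^ n) (n * x ^ n / x) x := by
  convert hasDerivAt_pow n x using 1
  cases n with
  | zero => simp
  | succ n => rw [Nat.add_sub_cancel]; field_simp; ring

theorem hasDerivAt_pow_mul_eval_add_inv (Q : 𝕜[X]) (m : ℕ) (hx : x ≠ 0) :
    HasDerivAt (fun t => t ^ m * Q.eval (t + t⁻¹))
      (x ^ m * (m * Q.eval (x + x⁻¹) + (x - x⁻¹) * Q.derivative.eval (x + x⁻¹)) / x) x := by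
  have hw : HasDerivAt (fun t => t + t⁻¹) (1 + -(x ^ 2)⁻¹) x :=
    (hasDerivAt_id' x).add (hasDerivAt_inv hx)
  refine ((hasDerivAt_pow_of_ne_zero m hx).mul ((Q.hasDerivAt _).comp x hw)).congr_deriv ?_
  simp only [Function.comp_apply]
  field_simp
  ring

end Calculus

theorem chebyshev_ode_of_pow_add_pow_eq (Q : ℂ[X]) (m : ℕ) (hQ : derivative Q ≠ 0)
    (hhom : ∀ x y : ℂ, x * y ≠ 0 →
      x ^ (2 * m) + y ^ (2 * m) = (x * y) ^ m * Q.eval ((x ^ 2 + y ^ 2) / (x * y))) :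
    C ((m : ℂ) ^ 2) * Q = X * derivative (X * derivative Q) - 4 * derivative (derivative Q) := by
  have h : ∀ x : ℂ, x ≠ 0 → x ^ (2 * m) + 1 = x ^ m * Q.eval (x + x⁻¹) := fun x hx => by
    have := hhom x 1 (by simpa using hx)
    rwa [one_pow, one_pow, mul_one, show (x ^ 2 + 1) / x = x + x⁻¹ by field_simp] at this
  have hinv : ∀ x : ℂ, x ≠ 0 → x ^ m * x⁻¹ ^ m = 1 := fun x hx => by
    rw [← mul_pow, mul_inv_cancel₀ hx, one_pow]
  have hval : ∀ x : ℂ, x ≠ 0 → Q.eval (x + x⁻¹) = x ^ m + x⁻¹ ^ m := fun x hx => by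
    apply mul_left_cancel₀ (pow_ne_zero m hx)
    rw [← h x hx]
    linear_combination -hinv x hx
  have hslope : ∀ x : ℂ, x ≠ 0 →
      (x - x⁻¹) * Q.derivative.eval (x + x⁻¹) = m * (x ^ m - x⁻¹ ^ m) := by
    intro x hx
    have hd := ((hasDerivAt_pow_of_ne_zero (2 * m) hx).add_const 1).unique
      ((hasDerivAt_pow_mul_eval_add_inv Q m hx).congr_of_eventuallyEq
        ((eventually_ne_nhds hx).mono h))
    rw [hval x hx, div_left_inj' hx] at hd
    apply mul_left_cancel₀ (pow_ne_zero m hx)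
    push_cast at hd
    linear_combination -hd
  have hsq : C ((m : ℂ) ^ 2) * (Q ^ 2 - 4) = (X ^ 2 - 4) * derivative Q ^ 2 := by
    rw [← sub_eq_zero]
    refine eq_zero_of_eval_add_inv_eq_zero _ fun x hx _ => ?_
    have hxx : x * x⁻¹ = 1 := mul_inv_cancel₀ hx
    simp only [eval_sub, eval_mul, eval_pow, eval_C, eval_X, eval_ofNat, hval x hx]
    linear_combination 4 * (m : ℂ) ^ 2 * hinv x hx - 4 * Q.derivative.eval (x + x⁻¹) ^ 2 * hxx -
      ((x - x⁻¹) * Q.derivative.eval (x + x⁻¹) + m * (x ^ m - x⁻¹ ^ m)) * hslope x hx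
  have hsq' := congrArg derivative hsq
  simp only [derivative_mul, derivative_C, derivative_sub, derivative_sq, derivative_X,
    derivative_ofNat, map_ofNat, zero_mul, zero_add, sub_zero, mul_one] at hsq'
  have hfactor : derivative Q * (2 * (C ((m : ℂ) ^ 2) * Q -
      (X * derivative (X * derivative Q) - 4 * derivative (derivative Q)))) = 0 := by
    rw [derivative_mul, derivative_X]
    linear_combination hsq'
  simpa [sub_eq_zero, hQ] using hfactor

theorem first_order_eq_of_pow_add_pow_eq (Q : ℂ[X]) (m : ℕ)
    (hhom : ∀ x y : ℂ, x * y ≠ 0 → x ^ (2 * m + 1) + y ^ (2 * m + 1) =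
      (x + y) * ((x * y) ^ m * Q.eval ((x ^ 2 + y ^ 2) / (x * y)))) :
    Q + 2 * (X * derivative Q) + 4 * derivative Q =
      C ((2 * (m : ℂ) + 1) * (-1) ^ m) * Q.comp (-X) := by
  have hsum : ∀ x : ℂ, x ≠ 0 →
      x ^ (2 * m + 1) + 1 = (x + 1) * (x ^ m * Q.eval (x + x⁻¹)) := fun x hx => by
    have := hhom x 1 (by simpa using hx)
    rwa [one_pow, one_pow, mul_one, show (x ^ 2 + 1) / x = x + x⁻¹ by field_simp] at this
  rw [← sub_eq_zero]
  refine eq_zero_of_eval_add_inv_eq_zero _ fun x hx hx1 => ?_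
  have hrhs := ((hasDerivAt_id' x).add_const 1).mul (hasDerivAt_pow_mul_eval_add_inv Q m hx)
  have hd := ((hasDerivAt_pow_of_ne_zero (2 * m + 1) hx).add_const 1).unique
    (hrhs.congr_of_eventuallyEq ((eventually_ne_nhds hx).mono hsum))
  have hplus := hsum x hx
  have hminus := hhom x (-1) (by simpa using hx)
  rw [Odd.neg_one_pow ⟨m, rfl⟩, neg_one_sq, mul_neg_one, neg_pow,
    show (x ^ 2 + 1) / -x = -(x + x⁻¹) by field_simp] at hminus
  have hxx : x * x⁻¹ = 1 := mul_inv_cancel₀ hx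
  simp only [eval_sub, eval_add, eval_mul, eval_C, eval_X, eval_comp, eval_neg, eval_ofNat]
  set q := Q.eval (x + x⁻¹)
  set d := Q.derivative.eval (x + x⁻¹)
  set r := Q.eval (-(x + x⁻¹))
  set i := x⁻¹
  field_simp at hd
  push_cast at hd
  apply mul_left_cancel₀ (mul_ne_zero (sub_ne_zero.2 hx1) (pow_ne_zero m hx))
  linear_combination (-2) * hd + 4 * x ^ m * d * hxx + (2 * m + 1) * hplus + (2 * m + 1) * hminus

section Recurrences

variable {R : Type*} [CommRing R] {Q : R[X]}

theorem coeff_add_two_of_chebyshev_ode {a : R}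
    (h : C a * Q = X * derivative (X * derivative Q) - 4 * derivative (derivative Q)) (j : ℕ) :
    4 * ((j + 2) * (j + 1)) * Q.coeff (j + 2) = (j ^ 2 - a) * Q.coeff j := by
  have hj := congrArg (coeff · j) h
  simp only [coeff_C_mul, coeff_sub, coeff_X_mul_derivative, coeff_ofNat_mul, coeff_derivative,
    add_assoc, Nat.reduceAdd] at hj
  push_cast at hj
  linear_combination hj

theorem coeff_succ_of_first_order_eq {b : R}
    (h : Q + 2 * (X * derivative Q) + 4 * derivative Q = C b * Q.comp (-X)) (j : ℕ) :
    (2 * j + 1) * Q.coeff j + 4 * (j + 1) * Q.coeff (j + 1) = b * (-1) ^ j * Q.coeff j := by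
  have hj := congrArg (coeff · j) h
  simp only [coeff_add, coeff_C_mul, coeff_X_mul_derivative, coeff_ofNat_mul, coeff_derivative,
    coeff_comp_neg_X] at hj
  linear_combination hj

theorem coeff_add_two_of_first_order_eq {N ε : R} (hε : ε ^ 2 = 1)
    (h : Q + 2 * (X * derivative Q) + 4 * derivative Q = C (N * ε) * Q.comp (-X)) (j : ℕ) :
    16 * ((j + 2) * (j + 1)) * Q.coeff (j + 2) =
      -((N + (-1) ^ j * ε) ^ 2 - (2 * j + 2) ^ 2) * Q.coeff j := by
  have h₀ := coeff_succ_of_first_order_eq h j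
  have h₁ := coeff_succ_of_first_order_eq h (j + 1)
  have hη : ((-1) ^ j * ε) ^ 2 = 1 := by
    rw [mul_pow, hε, ← pow_mul, pow_mul', neg_one_sq, one_pow, one_mul]
  simp only [add_assoc, Nat.reduceAdd, pow_succ] at h₁
  push_cast at h₁
  linear_combination (4 * ((j : R) + 1)) * h₁ - (2 * j + 3 + N * ε * (-1) ^ j) * h₀ +
    (1 - N ^ 2) * Q.coeff j * hη

end Recurrences

theorem coeff_add_two_of_pow_add_pow_eq_even (Q : ℂ[X]) (m : ℕ) (hm : m ≠ 0) (hQm : Q.coeff m ≠ 0)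
    (hhom : ∀ x y : ℂ, x * y ≠ 0 →
      x ^ (2 * m) + y ^ (2 * m) = (x * y) ^ m * Q.eval ((x ^ 2 + y ^ 2) / (x * y))) (j : ℕ) :
    4 * ((j + 2) * (j + 1)) * Q.coeff (j + 2) = (j ^ 2 - m ^ 2) * Q.coeff j := by
  have hQ : derivative Q ≠ 0 := fun h0 =>
    hQm (coeff_eq_zero_of_natDegree_lt (by rw [derivative_eq_zero.1 h0]; omega))
  exact coeff_add_two_of_chebyshev_ode (chebyshev_ode_of_pow_add_pow_eq Q m hQ hhom) j

theorem coeff_add_two_of_pow_add_pow_eq_odd (Q : ℂ[X]) (m : ℕ)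
    (hhom : ∀ x y : ℂ, x * y ≠ 0 → x ^ (2 * m + 1) + y ^ (2 * m + 1) =
      (x + y) * ((x * y) ^ m * Q.eval ((x ^ 2 + y ^ 2) / (x * y)))) (j : ℕ) :
    16 * ((j + 2) * (j + 1)) * Q.coeff (j + 2) =
      -((2 * m + 1 + (-1) ^ j * (-1) ^ m) ^ 2 - (2 * j + 2) ^ 2) * Q.coeff j :=
  coeff_add_two_of_first_order_eq (by rw [← pow_mul, pow_mul', neg_one_sq, one_pow])
    (first_order_eq_of_pow_add_pow_eq Q m hhom) j

/-- Generating the Ψ-integers from the previous term. -/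
theorem psi_ratio (n : ℕ) (hn : 1 ≤ n) (c : ℕ → ℚ)
    (hc : ∀ x y : ℂ, x ^ n + y ^ n =
      (x + y) ^ (n % 2) * ∑ k ∈ Finset.range (n / 2 + 1),
        (c k : ℂ) * (x * y) ^ (n / 2 - k) * (x ^ 2 + y ^ 2) ^ k) :
    c (n / 2) = 1 ∧
    ∀ k, 2 ≤ k → k ≤ n / 2 →
      16 * (k : ℚ) * ((k : ℚ) - 1) * c k =
        -(((n : ℚ) + (-1 : ℚ) ^ (n / 2 + k) * ((n % 2 : ℕ) : ℚ)) ^ 2 -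
          (2 * (k : ℚ) - 2 - 2 * (((n - 1) % 2 : ℕ) : ℚ)) ^ 2) * c (k - 2) := by
  set Q : ℂ[X] := ∑ k ∈ range (n / 2 + 1), C (c k : ℂ) * X ^ k
  have hcoeff : ∀ k ≤ n / 2, Q.coeff k = c k := fun k hk => by
    simp [Q, finsetSum_coeff, Nat.lt_succ_of_le hk]
  have hhom : ∀ x y : ℂ, x * y ≠ 0 → x ^ n + y ^ n =
      (x + y) ^ (n % 2) * ((x * y) ^ (n / 2) * Q.eval ((x ^ 2 + y ^ 2) / (x * y))) :=
    fun x y hxy => by rw [hc, sum_mul_pow_sub_mul_pow_eq_eval _ _ hxy]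
  have htop : c (n / 2) = 1 := by
    have h := hc 1 0
    simp only [one_pow, mul_zero, zero_pow two_ne_zero, add_zero, mul_one, one_mul,
      sum_mul_zero_pow_sub, zero_pow (by omega : n ≠ 0)] at h
    exact_mod_cast h.symm
  refine ⟨htop, fun k hk2 hkn => ?_⟩
  obtain ⟨j, rfl⟩ : ∃ j, k = j + 2 := ⟨k - 2, by omega⟩
  have hj := hcoeff j (by omega)
  have hj2 := hcoeff (j + 2) hkn
  obtain ⟨m, rfl | rfl⟩ := Nat.even_or_odd' n
  · rw [show 2 * m / 2 = m by omega] at htop hhom ⊢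
    have hrec := coeff_add_two_of_pow_add_pow_eq_even Q m (by omega)
      (by rw [hcoeff m (by omega), htop]; norm_num) (fun x y hxy => by simpa using hhom x y hxy) j
    rw [Nat.mul_mod_right, show (2 * m - 1) % 2 = 1 by omega, Nat.add_sub_cancel]
    refine Rat.cast_injective (α := ℂ) ?_
    push_cast
    rw [← hj, ← hj2]
    linear_combination 4 * hrec
  · rw [show (2 * m + 1) / 2 = m by omega] at hhom ⊢
    have hrec := coeff_add_two_of_pow_add_pow_eq_odd Q m
      (fun x y hxy => by simpa using hhom x y hxy) j
    rw [show (2 * m + 1) % 2 = 1 by omega, show (2 * m + 1 - 1) % 2 = 0 by omega,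
      Nat.add_sub_cancel]
    refine Rat.cast_injective (α := ℂ) ?_
    push_cast
    rw [← hj, ← hj2]
    linear_combination hrec
end

section
/- Let n be an even natural number with n ≡ 0 (mod 8) or n ≡ 4 (mod 8) (respectively n ≡ 2 (mod 8) or n ≡ 6 (mod 8)), and let (Ψ_k(n))_{0 ≤ k ≤ n/2} be the unique family of rational numbers such that for all complex x, y: x^n + y^n = ∑_{k=0}^{n/2} Ψ_k(n) (xy)^(n/2−k)(x²+y²)^k. Then Ψ_k(n) = 0 for every odd k (respectively, Ψ_k(n) = 0 for every even k) with 0 ≤ k ≤ n/2. -/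
/-- For every complex `v` there is a nonzero `t` with `t² + t⁻¹² = v`. -/
lemma psi_aux_exists (v : ℂ) : ∃ t : ℂ, t ≠ 0 ∧ t ^ 2 + t⁻¹ ^ 2 = v := by
  obtain ⟨w, hw⟩ : ∃ w : ℂ, w ^ 2 = v ^ 2 - 4 :=
    IsAlgClosed.exists_pow_nat_eq (v ^ 2 - 4) (two_pos)
  have hs1 : ((v + w) / 2) * ((v - w) / 2) = 1 := by
    linear_combination (-1/4 : ℂ) * hw
  have hs0 : (v + w) / 2 ≠ 0 := left_ne_zero_of_mul_eq_one hs1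
  have hsinv : ((v + w) / 2)⁻¹ = (v - w) / 2 := inv_eq_of_mul_eq_one_right hs1
  obtain ⟨t, ht⟩ : ∃ t : ℂ, t ^ 2 = (v + w) / 2 :=
    IsAlgClosed.exists_pow_nat_eq ((v + w) / 2) (two_pos)
  refine ⟨t, ?_, ?_⟩
  · intro h; apply hs0; rw [← ht, h]; ring
  · rw [inv_pow, ht, hsinv]; ring

/-- Vanishing of alternate Ψ-coefficients for even `n`. -/
theorem psi_vanishing (n : ℕ) (hn : n % 2 = 0) (c : ℕ → ℚ)
    (hc : ∀ x y : ℂ, x ^ n + y ^ n =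
      ∑ k ∈ Finset.range (n / 2 + 1),
        (c k : ℂ) * (x * y) ^ (n / 2 - k) * (x ^ 2 + y ^ 2) ^ k) :
    ((n % 8 = 0 ∨ n % 8 = 4) → ∀ k ≤ n / 2, k % 2 = 1 → c k = 0) ∧
    ((n % 8 = 2 ∨ n % 8 = 6) → ∀ k ≤ n / 2, k % 2 = 0 → c k = 0) := by
  set m := n / 2 with hm
  have hne : Even n := Nat.even_iff.mpr hn
  -- Difference identity: for all v, ∑ c k (1 - (-1)^(m-k)) v^k = 0
  have hdiff : ∀ v : ℂ,
      ∑ k ∈ Finset.range (m + 1), ((c k : ℂ) * (1 - (-1 : ℂ) ^ (m - k))) * v ^ k = 0 := by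
    intro v
    obtain ⟨t, ht, hv⟩ := psi_aux_exists v
    have h1 := hc t t⁻¹
    have h2 := hc t (-t⁻¹)
    have hxy : t * t⁻¹ = 1 := mul_inv_cancel₀ ht
    have hxy2 : t * -t⁻¹ = -1 := by rw [mul_neg, hxy]
    have hsq : t ^ 2 + (-t⁻¹) ^ 2 = v := by rw [neg_pow, ← hv]; ring
    rw [hxy, hv] at h1
    rw [hxy2, hsq, hne.neg_pow] at h2
    calc ∑ k ∈ Finset.range (m + 1), ((c k : ℂ) * (1 - (-1 : ℂ) ^ (m - k))) * v ^ k
        = (∑ k ∈ Finset.range (m + 1), (c k : ℂ) * (1 : ℂ) ^ (m - k) * v ^ k)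
          - ∑ k ∈ Finset.range (m + 1), (c k : ℂ) * (-1 : ℂ) ^ (m - k) * v ^ k := by
          rw [← Finset.sum_sub_distrib]
          exact Finset.sum_congr rfl fun k _ => by ring
      _ = (t ^ n + t⁻¹ ^ n) - (t ^ n + t⁻¹ ^ n) := by rw [← h1, ← h2]
      _ = 0 := by ring
  -- All coefficients of the resulting polynomial vanish
  have hco : ∀ k ≤ m, (c k : ℂ) * (1 - (-1 : ℂ) ^ (m - k)) = 0 := by
    intro k hk
    set p : Polynomial ℂ :=
      ∑ j ∈ Finset.range (m + 1),
        Polynomial.C ((c j : ℂ) * (1 - (-1 : ℂ) ^ (m - j))) * Polynomial.X ^ j with hp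
    have hpz : p = 0 := by
      apply Polynomial.zero_of_eval_zero
      intro v
      simpa [hp, Polynomial.eval_finset_sum] using hdiff v
    have hcoeff : p.coeff k = (c k : ℂ) * (1 - (-1 : ℂ) ^ (m - k)) := by
      rw [hp, Polynomial.finset_sum_coeff]
      rw [Finset.sum_eq_single k
        (fun j _ hj => by
          rw [Polynomial.coeff_C_mul, Polynomial.coeff_X_pow, if_neg (Ne.symm hj), mul_zero])
        (fun hks => absurd (Finset.mem_range.mpr (Nat.lt_succ_of_le hk)) hks)]
      rw [Polynomial.coeff_C_mul, Polynomial.coeff_X_pow, if_pos rfl, mul_one]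
    rw [hpz, Polynomial.coeff_zero] at hcoeff
    exact hcoeff.symm
  have key : ∀ k ≤ m, (m - k) % 2 = 1 → c k = 0 := by
    intro k hk hpar
    have h := hco k hk
    rw [(Nat.odd_iff.mpr hpar).neg_one_pow] at h
    have : (c k : ℂ) = 0 := by
      have h2 : (1 : ℂ) - (-1) = 2 := by norm_num
      rw [h2] at h
      simpa using mul_eq_zero.mp h
    exact_mod_cast this
  constructor
  · rintro h k hk hkp
    exact key k hk (by omega)
  · rintro h k hk hkp
    exact key k hk (by omega)
end

section
/- For every natural number n with n ≡ 1 (mod 4): 4^((n−1)/2) · ((n−1)/2)! = ∏_{λ=1}^{(n−1)/4} ((n+1)² − (4λ − 2)²), where the product is empty (hence 1) when (n−1)/4 = 0. Similarly, for every natural number n with n ≡ 2 (mod 4): 4^(n/2) · (n/2)! = 2n · ∏_{λ=1}^{(n−2)/4} (n² − (4λ − 2)²), where the product is empty (hence 1) when (n−2)/4 = 0. -/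
open Finset

lemma aux_fact (m : ℕ) : ∏ l ∈ Icc 1 m, l = Nat.factorial m := by
  rw [← Finset.Ico_add_one_right_eq_Icc, Finset.prod_Ico_id_eq_factorial]

lemma aux_reflect (m : ℕ) : ∏ l ∈ Icc 1 m, (m + 1 - l) = Nat.factorial m := by
  rw [← aux_fact]
  apply Finset.prod_nbij' (fun l => m + 1 - l) (fun l => m + 1 - l)
  all_goals intro a ha
  all_goals simp [Finset.mem_Icc] at *
  all_goals omega

lemma aux_shift (m : ℕ) : ∏ l ∈ Icc 1 m, (m + l) = ∏ k ∈ Ioc m (m + m), k := by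
  apply Finset.prod_nbij' (fun l => m + l) (fun k => k - m)
  all_goals intro a ha
  all_goals simp [Finset.mem_Icc, Finset.mem_Ioc] at *
  all_goals omega

lemma aux_prod (m : ℕ) :
    ∏ l ∈ Icc 1 m, ((m + 1 - l) * (m + l)) = Nat.factorial (2 * m) := by
  rw [Finset.prod_mul_distrib, aux_reflect, aux_shift, ← aux_fact, ← aux_fact]
  have h2 : Icc 1 m = Ioc 0 m := rfl
  have h3 : Icc 1 (2 * m) = Ioc 0 (2 * m) := rfl
  rw [h2, h3]
  rw [two_mul]
  exact Finset.prod_Ioc_consecutive (fun k => k) (Nat.zero_le m) (by omega : m ≤ m + m)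

lemma key (m : ℕ) :
    ∏ l ∈ Icc 1 m, ((4 * (m : ℤ) + 2) ^ 2 - (4 * (l : ℤ) - 2) ^ 2)
      = (16 : ℤ) ^ m * (Nat.factorial (2 * m) : ℤ) := by
  have hnat : 16 ^ m * Nat.factorial (2 * m)
      = ∏ l ∈ Icc 1 m, (16 * ((m + 1 - l) * (m + l))) := by
    rw [Finset.prod_mul_distrib, Finset.prod_const, Nat.card_Icc, aux_prod]
    simp
  have hcast : (16 : ℤ) ^ m * (Nat.factorial (2 * m) : ℤ)
      = ((16 ^ m * Nat.factorial (2 * m) : ℕ) : ℤ) := by push_cast; ring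
  rw [hcast, hnat, Nat.cast_prod]
  apply Finset.prod_congr rfl
  intro l hl
  simp only [Finset.mem_Icc] at hl
  have h1 : ((m + 1 - l : ℕ) : ℤ) = (m : ℤ) + 1 - (l : ℤ) := by omega
  push_cast [h1]
  ring

/-- Factorial factorization into differences of squares, cases `n ≡ 1, 2 (mod 4)`. -/
theorem factorial_diff_squares_mod4_one_two :
    (∀ n : ℕ, n % 4 = 1 →
      (4 : ℤ) ^ ((n - 1) / 2) * (Nat.factorial ((n - 1) / 2) : ℤ) =
        ∏ l ∈ Finset.Icc 1 ((n - 1) / 4), (((n : ℤ) + 1) ^ 2 - (4 * (l : ℤ) - 2) ^ 2)) ∧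
    (∀ n : ℕ, n % 4 = 2 →
      (4 : ℤ) ^ (n / 2) * (Nat.factorial (n / 2) : ℤ) =
        2 * (n : ℤ) * ∏ l ∈ Finset.Icc 1 ((n - 2) / 4), ((n : ℤ) ^ 2 - (4 * (l : ℤ) - 2) ^ 2)) := by
  constructor
  · intro n hn
    obtain ⟨m, rfl⟩ : ∃ m, n = 4 * m + 1 := ⟨n / 4, by omega⟩
    have h1 : (4 * m + 1 - 1) / 2 = 2 * m := by omega
    have h2 : (4 * m + 1 - 1) / 4 = m := by omega
    have h3 : ((4 * m + 1 : ℕ) : ℤ) + 1 = 4 * (m : ℤ) + 2 := by push_cast; ring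
    rw [h1, h2, h3, key, pow_mul]
    norm_num
  · intro n hn
    obtain ⟨m, rfl⟩ : ∃ m, n = 4 * m + 2 := ⟨n / 4, by omega⟩
    have h1 : (4 * m + 2) / 2 = 2 * m + 1 := by omega
    have h2 : (4 * m + 2 - 2) / 4 = m := by omega
    have h3 : ((4 * m + 2 : ℕ) : ℤ) = 4 * (m : ℤ) + 2 := by push_cast; ring
    rw [h1, h2, h3, key, Nat.factorial_succ]
    push_cast
    rw [pow_succ, pow_mul]
    ring
end

section
/- For every natural number n with n ≡ 3 (mod 4): 4^((n−1)/2) · ((n−1)/2)! = (n+1) · ∏_{λ=1}^{(n−3)/4} ((n+1)² − (4λ)²), where the product is empty (hence 1) when (n−3)/4 = 0. -/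
lemma fds_prod_shift (a k : ℕ) :
    a.factorial * ∏ j ∈ Finset.Icc (a + 1) (a + k), j = (a + k).factorial := by
  induction k with
  | zero => simp
  | succ k ih =>
    rw [show a + (k + 1) = (a + k) + 1 from rfl,
      Finset.prod_Icc_succ_top (by omega), ← mul_assoc, ih, Nat.factorial_succ]
    ring

lemma fds_prod_reflect (m : ℕ) :
    ∏ l ∈ Finset.Icc 1 m, (m + 1 - l) = m.factorial := by
  rw [← Finset.Ico_add_one_right_eq_Icc, Finset.prod_Ico_eq_prod_range]
  simp only [show m + 1 - 1 = m from rfl]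
  rw [← Finset.prod_range_add_one_eq_factorial m, ← Finset.prod_range_reflect (fun j => j + 1) m]
  apply Finset.prod_congr rfl
  intro j hj
  simp only [Finset.mem_range] at hj
  omega

lemma fds_key (m : ℕ) :
    (m + 1) * ∏ l ∈ Finset.Icc 1 m, ((m + 1 - l) * (m + 1 + l)) = (2 * m + 1).factorial := by
  rw [Finset.prod_mul_distrib, fds_prod_reflect]
  have h2 : ∏ l ∈ Finset.Icc 1 m, (m + 1 + l) = ∏ j ∈ Finset.Icc (m + 1 + 1) (m + 1 + m), j := by
    rw [← Finset.Ico_add_one_right_eq_Icc, ← Finset.Ico_add_one_right_eq_Icc, Finset.prod_Ico_eq_prod_range,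
      Finset.prod_Ico_eq_prod_range]
    apply Finset.prod_congr
    · congr 1; omega
    · intro j hj; omega
  rw [h2, show (2 * m + 1) = (m + 1) + m from by omega, ← fds_prod_shift (m + 1) m,
    Nat.factorial_succ]
  ring

/-- Factorial factorization into differences of squares, case `n ≡ 3 (mod 4)`. -/
theorem factorial_diff_squares_mod4_three (n : ℕ) (hn : n % 4 = 3) :
    (4 : ℤ) ^ ((n - 1) / 2) * (Nat.factorial ((n - 1) / 2) : ℤ) =
      ((n : ℤ) + 1) * ∏ l ∈ Finset.Icc 1 ((n - 3) / 4), (((n : ℤ) + 1) ^ 2 - (4 * (l : ℤ)) ^ 2) := by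
  obtain ⟨m, rfl⟩ : ∃ m, n = 4 * m + 3 := ⟨n / 4, by omega⟩
  have h1 : (4 * m + 3 - 1) / 2 = 2 * m + 1 := by omega
  have h2 : (4 * m + 3 - 3) / 4 = m := by omega
  rw [h1, h2]
  have hfac : ∀ l ∈ Finset.Icc 1 m,
      (((4 * m + 3 : ℕ) : ℤ) + 1) ^ 2 - (4 * (l : ℤ)) ^ 2
        = 16 * (((m + 1 - l) * (m + 1 + l) : ℕ) : ℤ) := by
    intro l hl
    simp only [Finset.mem_Icc] at hl
    have hle : l ≤ m + 1 := by omega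
    push_cast [Nat.cast_sub hle]
    ring
  rw [Finset.prod_congr rfl hfac, Finset.prod_mul_distrib, Finset.prod_const, Nat.card_Icc,
    ← Nat.cast_prod]
  have hkey := fds_key m
  have : ((2 * m + 1).factorial : ℤ)
      = ((m : ℤ) + 1) * ((∏ l ∈ Finset.Icc 1 m, ((m + 1 - l) * (m + 1 + l)) : ℕ) : ℤ) := by
    rw [← hkey]; push_cast; ring
  rw [this]
  have h4 : (4 : ℤ) ^ (2 * m + 1) = 4 * 16 ^ m := by
    rw [pow_succ, pow_mul]; norm_num [mul_comm]
  simp only [show m + 1 - 1 = m from rfl]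
  push_cast
  rw [h4]
  ring
end
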